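/- arXiv:1409.2937 — 8 statements merged into one kernel-verified Lean document; each statement's English description precedes it below -/
import Mathlib

section
/- For all positive integers n, the number of divisors d(n) satisfies d(n) ≤ 3.57 · n^(1/3). -/
/-!
Both `d(n)³` and `n` are multiplicative, so `d(n)³ / n` is the product over `p ^ e ∥ n` of
`(e + 1)³ / p ^ e`. For `p ≥ 8` this local factor is at most `1`, since `(e + 1)³ ≤ 8 ^ e`; for
`p = 2, 3, 5, 7` it is at most `8, 3, 8/5, 8/7` respectively. Hence
`d(n)³ ≤ (1536 / 35) n < 3.57³ n`.
-/

open Finset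

theorem Nat.cast_card_divisors_pow_le_prod_mul_self {k : ℕ} (c : ℕ → ℝ)
    (hc : ∀ p e : ℕ, p.Prime → ((e : ℝ) + 1) ^ k ≤ c p * p ^ e) {n : ℕ} (hn : n ≠ 0) :
    (n.divisors.card : ℝ) ^ k ≤ (∏ p ∈ n.primeFactors, c p) * n := by
  have hn' : (n : ℝ) = ∏ p ∈ n.primeFactors, (p : ℝ) ^ n.factorization p := by
    exact_mod_cast Nat.prod_primeFactors_pow_factorization hn
  rw [Nat.card_divisors hn, hn', ← prod_mul_distrib]
  push_cast
  rw [← prod_pow]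
  exact prod_le_prod (fun _ _ ↦ by positivity)
    fun p hp ↦ hc p _ (Nat.prime_of_mem_primeFactors hp)

theorem Finset.prod_le_prod_of_one_le_of_eq_one_of_notMem {ι R : Type*} [CommMonoidWithZero R]
    [PartialOrder R] [ZeroLEOneClass R] [PosMulMono R] {f : ι → R} (s t : Finset ι)
    (hf : ∀ i, 1 ≤ f i) (hft : ∀ i ∉ t, f i = 1) :
    ∏ i ∈ s, f i ≤ ∏ i ∈ t, f i := by
  classical
  calc ∏ i ∈ s, f i = ∏ i ∈ s ∩ t, f i :=
        (prod_subset inter_subset_left fun i _ hi ↦ hft i fun hit ↦ hi (by simp_all)).symm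
    _ ≤ ∏ i ∈ t, f i :=
        prod_le_prod_of_subset_of_one_le inter_subset_right
          (fun i _ ↦ zero_le_one.trans (hf i)) fun i _ _ ↦ hf i

theorem succ_pow_le_mul_pow_of_le {k p e₀ : ℕ} {C : ℝ}
    (hstep : ∀ e, e₀ ≤ e → (e + 2) ^ k ≤ p * (e + 1) ^ k)
    (hbase : ∀ e ≤ e₀, ((e : ℝ) + 1) ^ k ≤ C * p ^ e) (e : ℕ) :
    ((e : ℝ) + 1) ^ k ≤ C * p ^ e := by
  induction e with
  | zero => exact hbase 0 (Nat.zero_le _)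
  | succ e ih =>
    rcases le_or_gt (e + 1) e₀ with he | he
    · exact hbase _ he
    have hstep' : ((e : ℝ) + 2) ^ k ≤ p * ((e : ℝ) + 1) ^ k := by
      exact_mod_cast hstep e (by omega)
    calc (((e + 1 : ℕ) : ℝ) + 1) ^ k = ((e : ℝ) + 2) ^ k := by push_cast; ring
      _ ≤ p * ((e : ℝ) + 1) ^ k := hstep'
      _ ≤ p * (C * p ^ e) := by gcongr
      _ = C * p ^ (e + 1) := by ring

/-- For a prime `p`, the maximum over `e` of `(e + 1)³ / p ^ e`. -/
noncomputable def divisorCubeConst (p : ℕ) : ℝ :=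
  if p = 2 then 8 else if p = 3 then 3 else if p = 5 then 8 / 5 else if p = 7 then 8 / 7 else 1

theorem one_le_divisorCubeConst (p : ℕ) : 1 ≤ divisorCubeConst p := by
  unfold divisorCubeConst
  split_ifs <;> norm_num

theorem divisorCubeConst_eq_one {p : ℕ} (hp : p ∉ ({2, 3, 5, 7} : Finset ℕ)) :
    divisorCubeConst p = 1 := by
  simp only [mem_insert, mem_singleton, not_or] at hp
  simp [divisorCubeConst, hp]

theorem succ_pow_three_le_divisorCubeConst_mul_pow {p : ℕ} (hp : p.Prime) (e : ℕ) :
    ((e : ℝ) + 1) ^ 3 ≤ divisorCubeConst p * p ^ e := by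
  unfold divisorCubeConst
  split_ifs with h2 h3 h5 h7 <;> subst_vars
  · refine succ_pow_le_mul_pow_of_le (e₀ := 3) (fun e he ↦ ?_) (fun e he ↦ ?_) e
    · nlinarith [Nat.mul_le_mul he he, Nat.mul_le_mul (Nat.mul_le_mul he he) he]
    · interval_cases e <;> norm_num
  · refine succ_pow_le_mul_pow_of_le (e₀ := 2) (fun e he ↦ ?_) (fun e he ↦ ?_) e
    · nlinarith [Nat.mul_le_mul he he, Nat.mul_le_mul (Nat.mul_le_mul he he) he]
    · interval_cases e <;> norm_num
  · refine succ_pow_le_mul_pow_of_le (e₀ := 1) (fun e he ↦ ?_) (fun e he ↦ ?_) e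
    · nlinarith [Nat.mul_le_mul he he, Nat.mul_le_mul (Nat.mul_le_mul he he) he]
    · interval_cases e <;> norm_num
  · refine succ_pow_le_mul_pow_of_le (e₀ := 1) (fun e he ↦ ?_) (fun e he ↦ ?_) e
    · nlinarith [Nat.mul_le_mul he he, Nat.mul_le_mul (Nat.mul_le_mul he he) he]
    · interval_cases e <;> norm_num
  · have hp8 : 8 ≤ p := by
      by_contra! hlt
      interval_cases p <;> first | omega | norm_num at hp
    refine succ_pow_le_mul_pow_of_le (e₀ := 0) (fun e _ ↦ ?_) (fun e he ↦ ?_) e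
    · calc (e + 2) ^ 3 ≤ 8 * (e + 1) ^ 3 := by
            nlinarith [Nat.zero_le (e * e), Nat.zero_le (e * e * e)]
        _ ≤ p * (e + 1) ^ 3 := by gcongr
    · interval_cases e
      norm_num

theorem prod_divisorCubeConst_le (s : Finset ℕ) : ∏ p ∈ s, divisorCubeConst p ≤ 1536 / 35 :=
  calc ∏ p ∈ s, divisorCubeConst p ≤ ∏ p ∈ {2, 3, 5, 7}, divisorCubeConst p :=
        prod_le_prod_of_one_le_of_eq_one_of_notMem _ _ one_le_divisorCubeConst
          fun _ ↦ divisorCubeConst_eq_one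
    _ = 1536 / 35 := by norm_num [divisorCubeConst]

theorem Real.le_mul_rpow_one_div_of_pow_le {x y c : ℝ} {k : ℕ} (hk : k ≠ 0) (hx : 0 ≤ x)
    (hy : 0 ≤ y) (hc : 0 ≤ c) (h : x ^ k ≤ c ^ k * y) : x ≤ c * y ^ ((1 : ℝ) / k) := by
  calc x = (x ^ k) ^ ((1 : ℝ) / k) := by rw [one_div, Real.pow_rpow_inv_natCast hx hk]
    _ ≤ (c ^ k * y) ^ ((1 : ℝ) / k) := by gcongr
    _ = c * y ^ ((1 : ℝ) / k) := by
        rw [Real.mul_rpow (by positivity) hy, one_div, Real.pow_rpow_inv_natCast hc hk]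

theorem divisor_bound (n : ℕ) (hn : 0 < n) :
    ((n.divisors.card : ℝ)) ≤ 3.57 * (n : ℝ) ^ ((1 : ℝ) / 3) := by
  have hcube : (n.divisors.card : ℝ) ^ 3 ≤ 3.57 ^ 3 * n :=
    calc (n.divisors.card : ℝ) ^ 3 ≤ (∏ p ∈ n.primeFactors, divisorCubeConst p) * n :=
          Nat.cast_card_divisors_pow_le_prod_mul_self _
            (fun _ e hp ↦ succ_pow_three_le_divisorCubeConst_mul_pow hp e) hn.ne'
      _ ≤ 1536 / 35 * n := by gcongr; exact prod_divisorCubeConst_le _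
      _ ≤ 3.57 ^ 3 * n := by gcongr; norm_num
  exact_mod_cast Real.le_mul_rpow_one_div_of_pow_le three_ne_zero (by positivity) (by positivity)
    (by norm_num) hcube
end

section
/- For all positive integers n coprime to 3, the number of divisors d(n) satisfies d(n) ≤ 2.46 · n^(1/3). -/
/-!
The function `d(n)^3 / n` is multiplicative, with value `(k + 1)^3 / p^k` at `p^k`. For `p ≥ 8`
this is at most `1`; for `p = 5, 7` it is largest at `k = 1`, where it equals `8 / p`; for `p = 2`
it is at most `8`. As long as `3 ∤ n` this gives `d(n)^3 ≤ 8 · (8/5) · (8/7) · n = (512/35) n`,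
and `512/35 < 2.46^3`.
-/

open Finset

theorem Nat.succ_cube_le_eight_mul_two_pow (k : ℕ) : (k + 1) ^ 3 ≤ 8 * 2 ^ k := by
  obtain hk | hk := lt_or_ge k 3
  · interval_cases k <;> norm_num
  induction k, hk using Nat.le_induction with
  | base => norm_num
  | succ k hk ih =>
    have hcube : (k + 1 + 1) ^ 3 ≤ 2 * (k + 1) ^ 3 := by nlinarith [sq_nonneg k]
    calc (k + 1 + 1) ^ 3 ≤ 2 * (8 * 2 ^ k) := by omega
      _ = 8 * 2 ^ (k + 1) := by ring

theorem Nat.succ_cube_mul_le_eight_mul_pow {p k : ℕ} (hp : 4 ≤ p) (hk : 1 ≤ k) :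
    (k + 1) ^ 3 * p ≤ 8 * p ^ k := by
  induction k, hk using Nat.le_induction with
  | base => simp
  | succ k hk ih =>
    have hcube : (k + 1 + 1) ^ 3 ≤ 4 * (k + 1) ^ 3 := by nlinarith [sq_nonneg k]
    calc (k + 1 + 1) ^ 3 * p ≤ 4 * ((k + 1) ^ 3 * p) := by nlinarith
      _ ≤ p * (8 * p ^ k) := Nat.mul_le_mul hp ih
      _ = 8 * p ^ (k + 1) := by ring

/-- An upper bound for `(k + 1)^3 / p^k` over `k ≥ 1`, valid for every `p ≥ 2` except `p = 3`
(where the supremum is `3`, attained at `k = 2`). -/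
noncomputable def cubeDivisorConst (p : ℕ) : ℝ := if p = 2 then 8 else max 1 (8 / p)

theorem one_le_cubeDivisorConst (p : ℕ) : 1 ≤ cubeDivisorConst p := by
  unfold cubeDivisorConst
  split_ifs
  · norm_num
  · exact le_max_left _ _

theorem cubeDivisorConst_of_eight_le {p : ℕ} (hp : 8 ≤ p) : cubeDivisorConst p = 1 := by
  have hp' : (8 : ℝ) ≤ p := by exact_mod_cast hp
  rw [cubeDivisorConst, if_neg (by omega), max_eq_left ((div_le_one (by positivity)).2 hp')]

theorem succ_cube_le_cubeDivisorConst_mul_pow {p k : ℕ} (hp : 2 ≤ p) (hp3 : p ≠ 3)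
    (hk : 1 ≤ k) : ((k : ℝ) + 1) ^ 3 ≤ cubeDivisorConst p * p ^ k := by
  rcases eq_or_ne p 2 with rfl | hp2
  · rw [cubeDivisorConst, if_pos rfl]
    exact_mod_cast Nat.succ_cube_le_eight_mul_two_pow k
  · have h : ((k : ℝ) + 1) ^ 3 * p ≤ 8 * p ^ k := by
      exact_mod_cast Nat.succ_cube_mul_le_eight_mul_pow (by omega) hk
    calc ((k : ℝ) + 1) ^ 3 ≤ 8 / p * p ^ k := by
          rwa [div_mul_eq_mul_div, le_div_iff₀ (by positivity)]
      _ ≤ cubeDivisorConst p * p ^ k := by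
          rw [cubeDivisorConst, if_neg hp2]
          gcongr
          exact le_max_right _ _

theorem prod_cubeDivisorConst_le {s : Finset ℕ} (hs : ∀ p ∈ s, p.Prime) (h3 : 3 ∉ s) :
    ∏ p ∈ s, cubeDivisorConst p ≤ 512 / 35 := by
  have hsmall : {p ∈ s | p < 8} ⊆ {2, 5, 7} := by
    intro p hp
    obtain ⟨hps, hp8⟩ := mem_filter.1 hp
    have hp := hs p hps
    interval_cases p <;> simp_all +decide
  calc ∏ p ∈ s, cubeDivisorConst p = ∏ p ∈ s with p < 8, cubeDivisorConst p :=
        (prod_filter_of_ne fun p _ hp ↦ not_le.1 fun h ↦ hp (cubeDivisorConst_of_eight_le h)).symm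
    _ ≤ ∏ p ∈ {2, 5, 7}, cubeDivisorConst p :=
        prod_le_prod_of_subset_of_one_le hsmall
          (fun p _ ↦ zero_le_one.trans (one_le_cubeDivisorConst p))
          (fun p _ _ ↦ one_le_cubeDivisorConst p)
    _ = 512 / 35 := by norm_num [cubeDivisorConst]

theorem Nat.card_divisors_pow_le_prod_mul {n m : ℕ} (hn : n ≠ 0) (c : ℕ → ℝ)
    (hc : ∀ p ∈ n.primeFactors,
      ((n.factorization p : ℝ) + 1) ^ m ≤ c p * p ^ n.factorization p) :
    (#n.divisors : ℝ) ^ m ≤ (∏ p ∈ n.primeFactors, c p) * n := by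
  calc (#n.divisors : ℝ) ^ m = ∏ p ∈ n.primeFactors, ((n.factorization p : ℝ) + 1) ^ m := by
        rw [Nat.card_divisors hn]
        push_cast
        rw [prod_pow]
    _ ≤ ∏ p ∈ n.primeFactors, c p * p ^ n.factorization p :=
        prod_le_prod (fun _ _ ↦ by positivity) hc
    _ = (∏ p ∈ n.primeFactors, c p) * n := by
        rw [prod_mul_distrib]
        congr 1
        exact_mod_cast (Nat.prod_primeFactors_pow_factorization hn).symm

theorem Nat.card_divisors_cube_le_of_coprime_three {n : ℕ} (h3 : n.Coprime 3) :
    (#n.divisors : ℝ) ^ 3 ≤ 512 / 35 * n := by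
  have hn : n ≠ 0 := by rintro rfl; norm_num at h3
  have h3 : 3 ∉ n.primeFactors := fun h ↦
    (Nat.Prime.coprime_iff_not_dvd Nat.prime_three).1 h3.symm (Nat.dvd_of_mem_primeFactors h)
  refine (Nat.card_divisors_pow_le_prod_mul hn cubeDivisorConst fun p hp ↦ ?_).trans ?_
  · have hp' := Nat.prime_of_mem_primeFactors hp
    exact succ_cube_le_cubeDivisorConst_mul_pow hp'.two_le (ne_of_mem_of_not_mem hp h3)
      (hp'.factorization_pos_of_dvd hn (Nat.dvd_of_mem_primeFactors hp))
  · gcongr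
    exact prod_cubeDivisorConst_le (fun _ ↦ Nat.prime_of_mem_primeFactors) h3

theorem Real.le_mul_rpow_one_div_of_pow_le_s2 {x a y : ℝ} {m : ℕ} (hm : m ≠ 0) (ha : 0 ≤ a)
    (hy : 0 ≤ y) (h : x ^ m ≤ a ^ m * y) : x ≤ a * y ^ ((1 : ℝ) / m) := by
  refine le_of_pow_le_pow_left₀ hm (by positivity) ?_
  rwa [mul_pow, ← Real.rpow_natCast (y ^ _), ← Real.rpow_mul hy,
    one_div_mul_cancel (by exact_mod_cast hm), Real.rpow_one]

theorem divisor_bound_coprime_three_general (n : ℕ) (h3 : Nat.Coprime n 3) :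
    ((n.divisors.card : ℝ)) ≤ 2.46 * (n : ℝ) ^ ((1 : ℝ) / 3) := by
  have hcube : (#n.divisors : ℝ) ^ 3 ≤ 2.46 ^ 3 * n :=
    (Nat.card_divisors_cube_le_of_coprime_three h3).trans (by gcongr; norm_num)
  exact_mod_cast Real.le_mul_rpow_one_div_of_pow_le_s2 three_ne_zero (by norm_num) (by positivity)
    hcube

theorem divisor_bound_coprime_three (n : ℕ) (hn : 0 < n) (h3 : Nat.Coprime n 3) :
    ((n.divisors.card : ℝ)) ≤ 2.46 * (n : ℝ) ^ ((1 : ℝ) / 3) :=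
  divisor_bound_coprime_three_general n h3
end

section
/- For every integer b ≥ 75, the number of 5-regular partitions satisfies p_5(b+2) < 2 · p_5(b). -/
/-- `pk k n` is the number of `k`-regular partitions of `n`,
i.e. partitions of `n` in which no part is divisible by `k`. -/
noncomputable def pk (k n : ℕ) : ℕ :=
  Fintype.card {μ : n.Partition // ∀ i ∈ μ.parts, ¬ k ∣ i}

/-!
Every 5-regular partition of `n + 2` either contains a part 2, whose removal leaves a 5-regular
partition of `n`, or has no part 2 and arises from a 5-regular partition of `n` by `expand`.
Writing a partition as `1^a 2^c 3^d 4^e` plus its parts `≥ 6`, `expand` reads off from `c` which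
of the following moves to undo: remove two 1s (`c = 0`); replace a 1 and a part `q ≥ 6` by `q - 3`
ones and a 2 (`c = 1`); replace a part `q ≥ 6` by `q - 6` ones and two 2s (`c = 2`); replace two
4s by three 2s (`c = 3`); replace a 4 and two 3s, or four 3s, by four 2s and, in the second case,
two more 1s (`c = 4`, told apart by `a ≤ 1`). Hence `p₅(n + 2) ≤ 2 p₅(n)`, and strictly so:
a partition of `n` with exactly two 1s and one 2 expands to one with a part 5, so it is not
needed to cover.
-/

open Multiset

-- Positivity of the parts is automatic, since `k ∣ 0`.
def regularParts (k n : ℕ) : Set (Multiset ℕ) := {M | (∀ i ∈ M, ¬ k ∣ i) ∧ M.sum = n}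

def partitionEquivRegularParts (k n : ℕ) :
    {μ : n.Partition // ∀ i ∈ μ.parts, ¬ k ∣ i} ≃ regularParts k n where
  toFun μ := ⟨μ.1.parts, μ.2, μ.1.parts_sum⟩
  invFun M := ⟨⟨M.1, fun hi => Nat.pos_of_ne_zero fun h0 => M.2.1 _ hi (h0 ▸ dvd_zero k),
    M.2.2⟩, M.2.1⟩
  left_inv _ := rfl
  right_inv _ := rfl

theorem pk_eq_ncard (k n : ℕ) : pk k n = (regularParts k n).ncard := by
  rw [pk, ← Nat.card_eq_fintype_card, Nat.card_congr (partitionEquivRegularParts k n),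
    Nat.card_coe_set_eq]

theorem finite_regularParts (k n : ℕ) : (regularParts k n).Finite :=
  have := Finite.of_equiv _ (partitionEquivRegularParts k n)
  Set.toFinite _

namespace FiveRegular

def bigParts (M : Multiset ℕ) : Multiset ℕ := M.filter (6 ≤ ·)

def profile (a c d e : ℕ) (B : Multiset ℕ) : Multiset ℕ :=
  replicate a 1 + replicate c 2 + replicate d 3 + replicate e 4 + B

def expandProfile (a c d e : ℕ) (B : Multiset ℕ) : Multiset ℕ :=
  match c with
  | 0 => profile (a + 2) 0 d e B
  | 1 => profile 1 0 d e ((a + 3) ::ₘ B)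
  | 2 => profile 0 0 d e ((a + 6) ::ₘ B)
  | 3 => profile a 0 d (e + 2) B
  | c + 4 => if a ≤ 1 then profile a c (d + 2) (e + 1) B else profile (a - 2) c (d + 4) e B

def expand (N : Multiset ℕ) : Multiset ℕ :=
  expandProfile (N.count 1) (N.count 2) (N.count 3) (N.count 4) (bigParts N)

variable {a c d e n : ℕ} {B : Multiset ℕ}

theorem sum_profile : (profile a c d e B).sum = a + 2 * c + 3 * d + 4 * e + B.sum := by
  simp only [profile, sum_add, sum_replicate, smul_eq_mul]
  ring

theorem profile_mem_regularParts (hB : ∀ x ∈ B, ¬ 5 ∣ x)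
    (h : a + 2 * c + 3 * d + 4 * e + B.sum = n) : profile a c d e B ∈ regularParts 5 n := by
  refine ⟨fun i hi => ?_, sum_profile.trans h⟩
  simp only [profile, mem_add, mem_replicate] at hi
  rcases hi with ((((⟨-, rfl⟩ | ⟨-, rfl⟩) | ⟨-, rfl⟩) | ⟨-, rfl⟩) | hi)
  iterate 4 omega
  exact hB i hi

theorem eq_profile {M : Multiset ℕ} (hM : ∀ i ∈ M, ¬ 5 ∣ i) :
    M = profile (M.count 1) (M.count 2) (M.count 3) (M.count 4) (bigParts M) := by
  ext x
  simp only [profile, bigParts, count_add, count_replicate, count_filter]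
  rcases Nat.lt_or_ge x 6 with hx | hx
  · have h05 : x = 0 ∨ x = 5 → M.count x = 0 := by
      rintro (rfl | rfl) <;> exact count_eq_zero_of_notMem fun h => hM _ h (by norm_num)
    interval_cases x <;> simp_all
  · split_ifs <;> omega

theorem expand_profile (hB : ∀ x ∈ B, 6 ≤ x) :
    expand (profile a c d e B) = expandProfile a c d e B := by
  have hsmall : ∀ x < 6, B.count x = 0 := fun x hx =>
    count_eq_zero_of_notMem fun h => by have := hB x h; omega
  have hbig : bigParts (profile a c d e B) = B := by
    simp [bigParts, profile, filter_add, filter_eq_self.mpr hB, filter_eq_nil, mem_replicate]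
  rw [expand, hbig]
  simp [profile, count_replicate, hsmall]

theorem exists_expand_eq_profile_cons {q : ℕ} (ha : a ≤ 1) (hq : 6 ≤ q ∧ ¬ 5 ∣ q)
    (hB : ∀ x ∈ B, 6 ≤ x ∧ ¬ 5 ∣ x) (hsum : a + 3 * d + 4 * e + (q + B.sum) = n + 2) :
    ∃ N ∈ regularParts 5 n, expand N = profile a 0 d e (q ::ₘ B) := by
  have hB5 : ∀ x ∈ B, ¬ 5 ∣ x := fun x hx => (hB x hx).2
  interval_cases a
  · refine ⟨profile (q - 6) 2 d e B, profile_mem_regularParts hB5 (by omega), ?_⟩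
    rw [expand_profile fun x hx => (hB x hx).1, expandProfile, Nat.sub_add_cancel hq.1]
  · refine ⟨profile (q - 3) 1 d e B, profile_mem_regularParts hB5 (by omega), ?_⟩
    rw [expand_profile fun x hx => (hB x hx).1, expandProfile, Nat.sub_add_cancel (by omega)]

theorem exists_expand_eq_profile_zero (hn : 11 ≤ n) (ha : a ≤ 1)
    (hsum : a + 3 * d + 4 * e = n + 2) :
    ∃ N ∈ regularParts 5 n, expand N = profile a 0 d e 0 := by
  have h0 : ∀ x ∈ (0 : Multiset ℕ), ¬ 5 ∣ x := by simp
  have h6 : ∀ x ∈ (0 : Multiset ℕ), 6 ≤ x := by simp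
  rcases (by omega : 2 ≤ e ∨ e = 1 ∨ e = 0) with he | rfl | rfl
  · refine ⟨profile a 3 d (e - 2) 0,
      profile_mem_regularParts h0 (by rw [sum_zero]; omega), ?_⟩
    rw [expand_profile h6, expandProfile, Nat.sub_add_cancel he]
  · refine ⟨profile a 4 (d - 2) 0 0,
      profile_mem_regularParts h0 (by rw [sum_zero]; omega), ?_⟩
    rw [expand_profile h6, expandProfile, if_pos ha, Nat.sub_add_cancel (by omega)]
  · refine ⟨profile (a + 2) 4 (d - 4) 0 0,
      profile_mem_regularParts h0 (by rw [sum_zero]; omega), ?_⟩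
    rw [expand_profile h6, expandProfile, if_neg (by omega), Nat.add_sub_cancel,
      Nat.sub_add_cancel (by omega)]

theorem exists_expand_eq_profile (hn : 11 ≤ n) (hB : ∀ x ∈ B, 6 ≤ x ∧ ¬ 5 ∣ x)
    (hsum : a + 3 * d + 4 * e + B.sum = n + 2) :
    ∃ N ∈ regularParts 5 n, expand N = profile a 0 d e B := by
  by_cases ha : 2 ≤ a
  · refine ⟨profile (a - 2) 0 d e B,
      profile_mem_regularParts (fun x hx => (hB x hx).2) (by omega), ?_⟩
    rw [expand_profile fun x hx => (hB x hx).1, expandProfile, Nat.sub_add_cancel ha]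
  rcases B.empty_or_exists_mem with rfl | ⟨q, hq⟩
  · exact exists_expand_eq_profile_zero hn (by omega) (by simpa using hsum)
  · obtain ⟨B, rfl⟩ := exists_cons_of_mem hq
    exact exists_expand_eq_profile_cons (by omega) (hB q hq)
      (fun x hx => hB x (mem_cons_of_mem hx)) (by simpa using hsum)

theorem exists_eq_cons_two_or_expand (hn : 11 ≤ n) {M : Multiset ℕ}
    (hM : M ∈ regularParts 5 (n + 2)) :
    ∃ N ∈ regularParts 5 n, 2 ::ₘ N = M ∨ expand N = M := by
  by_cases h2 : 2 ∈ M
  · refine ⟨M.erase 2, ⟨fun i hi => hM.1 i (mem_of_mem_erase hi), ?_⟩,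
      .inl (cons_erase h2)⟩
    have := sum_erase h2
    have := hM.2
    omega
  have hc2 : M.count 2 = 0 := count_eq_zero.mpr h2
  have hprofile := eq_profile hM.1
  have hsum := congrArg Multiset.sum hprofile
  rw [sum_profile, hM.2, hc2] at hsum
  have hB : ∀ x ∈ bigParts M, 6 ≤ x ∧ ¬ 5 ∣ x := fun x hx =>
    ⟨(mem_filter.mp hx).2, hM.1 x (mem_filter.mp hx).1⟩
  obtain ⟨N, hN, hexpand⟩ :=
    exists_expand_eq_profile (a := M.count 1) (d := M.count 3) (e := M.count 4) hn hB (by omega)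
  exact ⟨N, hN, .inr (hexpand.trans (hc2 ▸ hprofile.symm))⟩

theorem exists_big_regular_sum_eq {m : ℕ} (hm : 12 ≤ m) :
    ∃ r : Multiset ℕ, (∀ x ∈ r, 6 ≤ x ∧ ¬ 5 ∣ x) ∧ r.sum = m := by
  by_cases h : 5 ∣ m
  · refine ⟨6 ::ₘ {m - 6}, ?_, by rw [sum_cons, sum_singleton]; omega⟩
    simp only [mem_cons, mem_singleton, forall_eq_or_imp, forall_eq]
    omega
  · exact ⟨{m}, by simp only [mem_singleton, forall_eq]; omega, sum_singleton m⟩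

theorem five_mem_expand_profile (hB : ∀ x ∈ B, 6 ≤ x) : 5 ∈ expand (profile 2 1 d e B) := by
  rw [expand_profile hB]
  simp [expandProfile, profile]

end FiveRegular

open FiveRegular

theorem p5_add_two_lt (b : ℕ) (hb : 75 ≤ b) : pk 5 (b + 2) < 2 * pk 5 b := by
  set R := regularParts 5 b
  obtain ⟨r, hr, hr_sum⟩ := exists_big_regular_sum_eq (m := b - 4) (by omega)
  set N₀ := profile 2 1 0 0 r
  have hN₀ : N₀ ∈ R := profile_mem_regularParts (fun x hx => (hr x hx).2) (by omega)
  have hcover : regularParts 5 (b + 2) ⊆ cons 2 '' R ∪ expand '' (R \ {N₀}) := by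
    intro M hM
    obtain ⟨N, hN, hcons | hexpand⟩ := exists_eq_cons_two_or_expand (by omega) hM
    · exact .inl ⟨N, hN, hcons⟩
    · refine .inr ⟨N, ⟨hN, ?_⟩, hexpand⟩
      rintro rfl
      exact hM.1 5 (hexpand ▸ five_mem_expand_profile fun x hx => (hr x hx).1) dvd_rfl
  have hR := finite_regularParts 5 b
  rw [pk_eq_ncard, pk_eq_ncard]
  calc (regularParts 5 (b + 2)).ncard
      ≤ (cons 2 '' R ∪ expand '' (R \ {N₀})).ncard :=
        Set.ncard_le_ncard hcover ((hR.image _).union (hR.sdiff.image _))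
    _ ≤ (cons 2 '' R).ncard + (expand '' (R \ {N₀})).ncard := Set.ncard_union_le _ _
    _ ≤ R.ncard + (R \ {N₀}).ncard :=
        add_le_add (Set.ncard_image_le hR) (Set.ncard_image_le hR.sdiff)
    _ < 2 * R.ncard := by
      have := Set.ncard_sdiff_singleton_lt_of_mem hN₀ hR
      omega
end

section
/- For every integer n ≥ 9 with n ≡ 1 (mod 3), we have maxp_2(n) = 5 · 2^((n-7)/3), and for n ≥ 9 with n ≡ 2 (mod 3) and n ≠ 11, maxp_2(n) = 25 · 2^((n-14)/3). -/
/-- Extension of `pk k` to partitions: the product of `pk k` over the parts. -/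
noncomputable def pkext (k : ℕ) {n : ℕ} (μ : n.Partition) : ℕ :=
  (μ.parts.map (pk k)).prod

open Multiset

theorem Multiset.eq_and_eq_of_cons_eq_cons {α : Type*} [PartialOrder α] {a b : α}
    {s t : Multiset α} (ha : ∀ x ∈ s, a ≤ x) (hb : ∀ x ∈ t, b ≤ x)
    (h : a ::ₘ s = b ::ₘ t) : a = b ∧ s = t := by
  have hab : a = b := by
    rcases mem_cons.1 (h ▸ mem_cons_self a s) with hab | hat
    · exact hab
    rcases mem_cons.1 (h ▸ mem_cons_self b t) with hba | hbs
    · exact hba.symm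
    · exact le_antisymm (ha b hbs) (hb a hat)
  exact ⟨hab, (cons_inj_right a).1 (hab ▸ h)⟩

namespace Nat.Partition

theorem parts_ne_zero {n : ℕ} (μ : n.Partition) (hn : n ≠ 0) : μ.parts ≠ 0 := by
  rintro h
  exact hn (μ.parts_sum ▸ h ▸ Multiset.sum_zero)

end Nat.Partition

noncomputable def oddPartCount (m n : ℕ) : ℕ :=
  Fintype.card {μ : n.Partition // ∀ i ∈ μ.parts, ¬ 2 ∣ i ∧ m ≤ i}

theorem pk_two_eq_oddPartCount_one (n : ℕ) : pk 2 n = oddPartCount 1 n :=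
  Fintype.card_congr <| Equiv.subtypeEquivRight fun μ =>
    ⟨fun h i hi => ⟨h i hi, μ.parts_pos hi⟩, fun h i hi => (h i hi).1⟩

theorem oddPartCount_zero_right (m : ℕ) : oddPartCount m 0 = 1 := by
  have hparts (μ : Nat.Partition 0) (i : ℕ) (hi : i ∈ μ.parts) : False := by
    have := μ.parts_pos hi
    have := Nat.Partition.le_of_mem_parts hi
    omega
  rw [oddPartCount, Fintype.card_eq_one_iff]
  exact ⟨⟨default, fun i hi => (hparts _ i hi).elim⟩, fun _ => Subtype.ext (Subsingleton.elim _ _)⟩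

theorem oddPartCount_eq_zero {m n : ℕ} (h0 : 0 < n) (h : n < m) : oddPartCount m n = 0 := by
  rw [oddPartCount, Fintype.card_eq_zero_iff]
  refine ⟨fun ⟨μ, hμ⟩ => ?_⟩
  obtain ⟨i, hi⟩ := exists_mem_of_ne_zero (μ.parts_ne_zero h0.ne')
  have := (hμ i hi).2
  have := Nat.Partition.le_of_mem_parts hi
  omega

theorem oddPartCount_eq_add {m n : ℕ} (hm : ¬ 2 ∣ m) (hmn : m ≤ n) :
    oddPartCount m n = oddPartCount m (n - m) + oddPartCount (m + 2) n := by
  classical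
  have withPart : {μ : {μ : n.Partition // ∀ i ∈ μ.parts, ¬ 2 ∣ i ∧ m ≤ i} // m ∈ μ.1.parts} ≃
      {ν : (n - m).Partition // ∀ i ∈ ν.parts, ¬ 2 ∣ i ∧ m ≤ i} :=
    (Equiv.subtypeSubtypeEquivSubtypeInter _ _).trans <|
    (Equiv.subtypeEquivRight fun _ => and_comm).trans <|
    (Equiv.subtypeSubtypeEquivSubtypeInter _ _).symm.trans <|
    (Nat.Partition.partitionWithPartEquiv (by omega) hmn).subtypeEquiv fun μ => by
      rw [Nat.Partition.partitionWithPartEquiv_apply_parts]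
      conv_lhs => rw [← cons_erase μ.2]
      simp only [mem_cons, forall_eq_or_imp]
      exact ⟨And.right, And.intro ⟨hm, le_rfl⟩⟩
  have withoutPart : {μ : {μ : n.Partition // ∀ i ∈ μ.parts, ¬ 2 ∣ i ∧ m ≤ i} // m ∉ μ.1.parts} ≃
      {μ : n.Partition // ∀ i ∈ μ.parts, ¬ 2 ∣ i ∧ m + 2 ≤ i} :=
    (Equiv.subtypeSubtypeEquivSubtypeInter (fun μ : n.Partition => ∀ i ∈ μ.parts, ¬ 2 ∣ i ∧ m ≤ i)
      (fun μ => m ∉ μ.parts)).trans <| Equiv.subtypeEquivRight fun μ => by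
      refine ⟨fun ⟨h, hm⟩ i hi => ?_, fun h => ⟨fun i hi => ?_, fun hmem => ?_⟩⟩
      · have := h i hi
        have : i ≠ m := by rintro rfl; exact hm hi
        omega
      · have := h i hi; omega
      · have := h m hmem; omega
  rw [oddPartCount, oddPartCount, oddPartCount,
    ← Fintype.card_congr (Equiv.sumCompl fun μ : {μ : n.Partition // _} => m ∈ μ.1.parts),
    Fintype.card_sum, Fintype.card_congr withPart, Fintype.card_congr withoutPart]

/-- Lowering the smallest part by two is injective, as the lowered part is the smallest one. -/
theorem oddPartCount_add_two_le (m n : ℕ) : oddPartCount (m + 2) (n + 2) ≤ oddPartCount m n := by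
  classical
  have hne (μ : (n + 2).Partition) : μ.parts.toFinset.Nonempty := by
    simpa using μ.parts_ne_zero (by omega)
  let low : (n + 2).Partition → ℕ := fun μ => μ.parts.toFinset.min' (hne μ)
  have low_mem (μ) : low μ ∈ μ.parts := mem_toFinset.1 (Finset.min'_mem _ _)
  have low_le (μ) (i) (hi : i ∈ μ.parts) : low μ ≤ i := Finset.min'_le _ _ (mem_toFinset.2 hi)
  let lower (μ : {μ : (n + 2).Partition // ∀ i ∈ μ.parts, ¬ 2 ∣ i ∧ m + 2 ≤ i}) :
      {ν : n.Partition // ∀ i ∈ ν.parts, ¬ 2 ∣ i ∧ m ≤ i} := by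
    have hlow := μ.2 _ (low_mem μ.1)
    refine ⟨⟨(low μ.1 - 2) ::ₘ μ.1.parts.erase (low μ.1), fun hi => ?_, ?_⟩, fun i hi => ?_⟩
    · rcases mem_cons.1 hi with rfl | hi
      · omega
      · exact μ.1.parts_pos (mem_of_mem_erase hi)
    · have := congrArg sum (cons_erase (low_mem μ.1))
      rw [sum_cons, μ.1.parts_sum] at this
      rw [sum_cons]
      omega
    · rcases mem_cons.1 hi with rfl | hi
      · omega
      · have := μ.2 i (mem_of_mem_erase hi); omega
  refine Fintype.card_le_of_injective lower fun μ ν h => ?_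
  have hμ := μ.2 _ (low_mem μ.1)
  have hν := ν.2 _ (low_mem ν.1)
  obtain ⟨hlow, herase⟩ := eq_and_eq_of_cons_eq_cons
    (fun i hi => (low_le μ.1 i (mem_of_mem_erase hi)).trans' (Nat.sub_le _ _))
    (fun i hi => (low_le ν.1 i (mem_of_mem_erase hi)).trans' (Nat.sub_le _ _))
    (congrArg (fun ν => ν.1.parts) h)
  have hlow' : low μ.1 = low ν.1 := by omega
  refine Subtype.ext <| Nat.Partition.ext ?_
  rw [← cons_erase (low_mem μ.1), ← cons_erase (low_mem ν.1), herase, hlow']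

theorem pk_two_three : pk 2 3 = 2 := by
  simp (disch := decide) [pk_two_eq_oddPartCount_one, oddPartCount_eq_add,
    oddPartCount_zero_right, oddPartCount_eq_zero]

theorem pk_two_seven : pk 2 7 = 5 := by
  simp (disch := decide) [pk_two_eq_oddPartCount_one, oddPartCount_eq_add,
    oddPartCount_zero_right, oddPartCount_eq_zero]

theorem oddPartCount_le_of_step {m : ℕ} (hm : ¬ 2 ∣ m) {F : ℕ → ℕ} (hF0 : 1 ≤ F 0)
    (hstep : ∀ k, (∀ j < k + m, oddPartCount m j ≤ F j) →
      F k + oddPartCount (m + 2) (k + m) ≤ F (k + m)) (n : ℕ) :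
    oddPartCount m n ≤ F n := by
  induction n using Nat.strong_induction_on with
  | _ n ih =>
    rcases Nat.eq_zero_or_pos n with rfl | hn
    · rwa [oddPartCount_zero_right]
    rcases lt_or_ge n m with hnm | hmn
    · simp [oddPartCount_eq_zero hn hnm]
    obtain ⟨k, rfl⟩ : ∃ k, n = k + m := ⟨n - m, by omega⟩
    calc oddPartCount m (k + m) = oddPartCount m k + oddPartCount (m + 2) (k + m) := by
          rw [oddPartCount_eq_add hm (by omega), Nat.add_sub_cancel]
      _ ≤ F k + oddPartCount (m + 2) (k + m) := by gcongr; exact ih k (by omega)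
      _ ≤ F (k + m) := hstep k ih

def oddPartBound5 : ℕ → ℕ
  | 0 => 1
  | 1 | 2 | 3 | 4 => 0
  | n + 5 => oddPartBound5 n + oddPartBound5 (n + 3)

def oddPartBound3 : ℕ → ℕ
  | 0 => 1
  | 1 | 2 => 0
  | n + 3 => oddPartBound3 n + oddPartBound5 (n + 3)

/-- `maxp_2(n)`: tabulated for `n < 15`, and doubled by each further part `3`. -/
def maxp2Bound : ℕ → ℕ
  | n + 15 => 2 * maxp2Bound (n + 12)
  | n => [1, 1, 1, 2, 2, 3, 4, 5, 6, 8, 10, 12, 16, 20, 25].getD n 0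

theorem oddPartBound5_add_five (n : ℕ) :
    oddPartBound5 (n + 5) = oddPartBound5 n + oddPartBound5 (n + 3) := by
  rw [oddPartBound5]

theorem oddPartBound3_add_three (n : ℕ) :
    oddPartBound3 (n + 3) = oddPartBound3 n + oddPartBound5 (n + 3) := by
  rw [oddPartBound3]

theorem maxp2Bound_add_three {n : ℕ} (hn : 12 ≤ n) : maxp2Bound (n + 3) = 2 * maxp2Bound n := by
  obtain ⟨k, rfl⟩ : ∃ k, n = k + 12 := ⟨n - 12, by omega⟩
  rw [maxp2Bound]

theorem oddPartCount_five_le (n : ℕ) : oddPartCount 5 n ≤ oddPartBound5 n :=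
  oddPartCount_le_of_step (by decide) le_rfl (fun k ih => by
    have : oddPartCount 7 (k + 5) ≤ oddPartBound5 (k + 3) :=
      (oddPartCount_add_two_le 5 (k + 3)).trans (ih (k + 3) (by omega))
    rw [oddPartBound5_add_five]
    exact Nat.add_le_add_left this _) n

theorem oddPartCount_three_le (n : ℕ) : oddPartCount 3 n ≤ oddPartBound3 n :=
  oddPartCount_le_of_step (by decide) le_rfl (fun k _ => by
    rw [oddPartBound3_add_three]
    exact Nat.add_le_add_left (oddPartCount_five_le _) _) n

theorem oddPartBound5_add_three_le {n : ℕ} (hn : 23 ≤ n) :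
    oddPartBound5 (n + 3) ≤ 2 * oddPartBound5 n := by
  induction n using Nat.strong_induction_on with
  | _ n ih =>
    by_cases hn' : n < 28
    · interval_cases n <;> decide
    obtain ⟨k, rfl⟩ : ∃ k, n = k + 5 := ⟨n - 5, by omega⟩
    have h₁ := ih k (by omega) (by omega)
    have h₂ := ih (k + 3) (by omega) (by omega)
    have e₁ := oddPartBound5_add_five k
    have e₂ := oddPartBound5_add_five (k + 3)
    rw [show k + 5 + 3 = k + 3 + 5 by ring]
    omega

theorem oddPartBound3_add_three_le {n : ℕ} (hn : 23 ≤ n) :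
    oddPartBound3 (n + 3) ≤ 2 * oddPartBound3 n := by
  induction n using Nat.strong_induction_on with
  | _ n ih =>
    by_cases hn' : n < 26
    · interval_cases n <;> decide
    obtain ⟨k, rfl⟩ : ∃ k, n = k + 3 := ⟨n - 3, by omega⟩
    have h₁ := ih k (by omega) (by omega)
    have h₂ := oddPartBound5_add_three_le (n := k + 3) (by omega)
    have e₁ := oddPartBound3_add_three k
    have e₂ := oddPartBound3_add_three (k + 3)
    omega

theorem maxp2Bound_add_oddPartBound3_le (n : ℕ) :
    maxp2Bound n + oddPartBound3 (n + 1) ≤ maxp2Bound (n + 1) := by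
  induction n using Nat.strong_induction_on with
  | _ n ih =>
    by_cases hn : n < 28
    · interval_cases n <;> decide
    obtain ⟨k, rfl⟩ : ∃ k, n = k + 3 := ⟨n - 3, by omega⟩
    have h₁ := ih k (by omega)
    have h₂ := oddPartBound3_add_three_le (n := k + 1) (by omega)
    rw [maxp2Bound_add_three (by omega), show k + 3 + 1 = k + 1 + 3 by ring,
      maxp2Bound_add_three (by omega)]
    omega

theorem pk_two_le_maxp2Bound (n : ℕ) : pk 2 n ≤ maxp2Bound n := by
  rw [pk_two_eq_oddPartCount_one]
  exact oddPartCount_le_of_step (m := 1) (by decide) le_rfl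
    (fun k _ => (Nat.add_le_add_left (oddPartCount_three_le _) _).trans
      (maxp2Bound_add_oddPartBound3_le k)) n

theorem maxp2Bound_mul_le (a b : ℕ) : maxp2Bound a * maxp2Bound b ≤ maxp2Bound (a + b) := by
  induction h : a + b using Nat.strong_induction_on generalizing a b with
  | _ s ih =>
    wlog hab : a ≤ b generalizing a b
    · rw [mul_comm]
      exact this b a (by omega) (by omega)
    subst h
    by_cases hb : b < 15
    · have ha : a < 15 := by omega
      interval_cases a <;> interval_cases b <;> decide
    obtain ⟨c, rfl⟩ : ∃ c, b = c + 3 := ⟨b - 3, by omega⟩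
    rw [← add_assoc, maxp2Bound_add_three (by omega), maxp2Bound_add_three (by omega)]
    have := ih (a + c) (by omega) a c rfl
    nlinarith

theorem prod_map_pk_two_le (s : Multiset ℕ) : (s.map (pk 2)).prod ≤ maxp2Bound s.sum := by
  induction s using Multiset.induction with
  | empty => simp [maxp2Bound]
  | cons a s ih =>
    rw [map_cons, prod_cons, sum_cons]
    exact (Nat.mul_le_mul (pk_two_le_maxp2Bound a) ih).trans (maxp2Bound_mul_le a s.sum)

theorem maxp2Bound_seven_add_three_mul (q : ℕ) : maxp2Bound (7 + 3 * q) = 5 * 2 ^ q := by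
  induction q with
  | zero => rfl
  | succ q ih =>
    rcases Nat.lt_or_ge q 2 with hq | hq
    · interval_cases q <;> rfl
    rw [show 7 + 3 * (q + 1) = 7 + 3 * q + 3 by ring, maxp2Bound_add_three (by omega), ih, pow_succ]
    ring

theorem maxp2Bound_fourteen_add_three_mul (q : ℕ) : maxp2Bound (14 + 3 * q) = 25 * 2 ^ q := by
  induction q with
  | zero => rfl
  | succ q ih =>
    rw [show 14 + 3 * (q + 1) = 14 + 3 * q + 3 by ring, maxp2Bound_add_three (by omega), ih,
      pow_succ]
    ring

theorem isGreatest_maxp2Bound {n : ℕ} (s : Multiset ℕ) (hs : ∀ i ∈ s, ¬ 2 ∣ i) (hsum : s.sum = n)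
    (hprod : (s.map (pk 2)).prod = maxp2Bound n) :
    IsGreatest {m | ∃ μ : n.Partition, (∀ i ∈ μ.parts, ¬ 2 ∣ i) ∧ pkext 2 μ = m}
      (maxp2Bound n) := by
  refine ⟨⟨⟨s, fun hi => Nat.pos_of_ne_zero ?_, hsum⟩, hs, hprod⟩, ?_⟩
  · rintro rfl; exact hs 0 hi (dvd_zero 2)
  · rintro _ ⟨μ, -, rfl⟩
    simpa only [pkext, μ.parts_sum] using prod_map_pk_two_le μ.parts

theorem maxp2_one_two_mod_three (n : ℕ) (hn : 9 ≤ n) :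
    (n % 3 = 1 →
      IsGreatest {m : ℕ | ∃ μ : n.Partition, (∀ i ∈ μ.parts, ¬ 2 ∣ i) ∧ pkext 2 μ = m}
        (5 * 2 ^ ((n - 7) / 3))) ∧
    (n % 3 = 2 → n ≠ 11 →
      IsGreatest {m : ℕ | ∃ μ : n.Partition, (∀ i ∈ μ.parts, ¬ 2 ∣ i) ∧ pkext 2 μ = m}
        (25 * 2 ^ ((n - 14) / 3))) := by
  refine ⟨fun hn₁ => ?_, fun hn₂ hn₁₁ => ?_⟩
  · obtain ⟨q, rfl⟩ : ∃ q, n = 7 + 3 * q := ⟨(n - 7) / 3, by omega⟩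
    rw [show (7 + 3 * q - 7) / 3 = q by omega, ← maxp2Bound_seven_add_three_mul]
    exact isGreatest_maxp2Bound (7 ::ₘ replicate q 3) (by simp [mem_replicate])
      (by simp only [sum_cons, sum_replicate, smul_eq_mul]; ring)
      (by simp [maxp2Bound_seven_add_three_mul, pk_two_three, pk_two_seven])
  · obtain ⟨q, rfl⟩ : ∃ q, n = 14 + 3 * q := ⟨(n - 14) / 3, by omega⟩
    rw [show (14 + 3 * q - 14) / 3 = q by omega, ← maxp2Bound_fourteen_add_three_mul]
    exact isGreatest_maxp2Bound (7 ::ₘ 7 ::ₘ replicate q 3) (by simp [mem_replicate])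
      (by simp only [sum_cons, sum_replicate, smul_eq_mul]; ring)
      (by simp [maxp2Bound_fourteen_add_three_mul, pk_two_three, pk_two_seven]; ring)
end

section
/- For every integer n ≥ 2: maxp_4(n) = 3^(n/3) if n ≡ 0 (mod 3), maxp_4(n) = 4 · 3^((n-4)/3) if n ≡ 1 (mod 3), and maxp_4(n) = 2 · 3^((n-2)/3) if n ≡ 2 (mod 3). -/
/-!
Deleting the largest part `j` of a 4-regular partition of `n` leaves a 4-regular partition of
`n - j`. Since no part equals 4 and there are at most `⌊n/2⌋ + 1` partitions into ones and twos,
`p₄(n) ≤ ⌊n/2⌋ + 1 + p₄(n - 3) + ∑_{5 ≤ j ≤ n} p₄(n - j)`,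
and induction gives `p₄(n) ≤ F(n) := maxPartProduct n`, using `F(n + 3) = 3 F(n)` for `n ≠ 1`.
As `F` is supermultiplicative, `p₄(μ) ≤ F(n)` for every partition `μ` of `n`; partitions into at
most two twos and otherwise threes attain `F(n)`, because `p₄(2) = 2` and `p₄(3) = 3`.
-/

open Finset

def boundedRegularParts (k n m : ℕ) : Finset (Multiset ℕ) :=
  (Nat.Partition.restricted n fun i => ¬ k ∣ i ∧ i ≤ m).image Nat.Partition.parts

section BoundedRegularParts

variable {k n m m' : ℕ}

theorem mem_boundedRegularParts {s : Multiset ℕ} :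
    s ∈ boundedRegularParts k n m ↔ s.sum = n ∧ ∀ i ∈ s, 0 < i ∧ ¬ k ∣ i ∧ i ≤ m := by
  simp only [boundedRegularParts, Nat.Partition.restricted, Finset.mem_image, Finset.mem_filter,
    Finset.mem_univ, true_and]
  constructor
  · rintro ⟨μ, hμ, rfl⟩
    exact ⟨μ.parts_sum, fun i hi => ⟨μ.parts_pos hi, hμ i hi⟩⟩
  · rintro ⟨hsum, hs⟩
    exact ⟨⟨s, fun hi => (hs _ hi).1, hsum⟩, fun i hi => (hs i hi).2, rfl⟩

theorem boundedRegularParts_mono (h : min m n ≤ m') :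
    boundedRegularParts k n m ⊆ boundedRegularParts k n m' := by
  intro s hs
  rw [mem_boundedRegularParts] at hs ⊢
  refine ⟨hs.1, fun i hi => ⟨(hs.2 i hi).1, (hs.2 i hi).2.1, ?_⟩⟩
  have hin : i ≤ n := hs.1 ▸ Multiset.le_sum_of_mem hi
  have him := (hs.2 i hi).2.2
  omega

theorem card_boundedRegularParts_self (k n : ℕ) : #(boundedRegularParts k n n) = pk k n := by
  rw [pk, Fintype.card_subtype, boundedRegularParts,
    card_image_of_injective _ fun _ _ => Nat.Partition.ext, Nat.Partition.restricted]
  congr 1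
  exact filter_congr fun μ _ =>
    forall₂_congr fun _ hi => and_iff_left (Nat.Partition.le_of_mem_parts hi)

theorem card_boundedRegularParts_le_pk (k n m : ℕ) : #(boundedRegularParts k n m) ≤ pk k n :=
  card_boundedRegularParts_self k n ▸ card_le_card (boundedRegularParts_mono (min_le_right _ _))

theorem boundedRegularParts_eq_pred_of_dvd (h : k ∣ m) :
    boundedRegularParts k n m = boundedRegularParts k n (m - 1) := by
  ext s
  simp only [mem_boundedRegularParts]
  refine and_congr_right fun _ => forall₂_congr fun i _ => ?_
  constructor
  · rintro ⟨hi, hk, him⟩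
    have : i ≠ m := fun hm => hk (hm ▸ h)
    exact ⟨hi, hk, by omega⟩
  · rintro ⟨hi, hk, him⟩
    exact ⟨hi, hk, by omega⟩

/-- Split according to whether `m` is a part; removing one part `m` is injective. -/
theorem card_boundedRegularParts_le_add (k n m : ℕ) :
    #(boundedRegularParts k n m) ≤
      #(boundedRegularParts k n (m - 1)) + #(boundedRegularParts k (n - m) m) := by
  rw [← card_filter_add_card_filter_not (m ∈ ·), add_comm]
  refine add_le_add (card_le_card fun s hs => ?_) (card_le_card_of_injOn
    (fun s : Multiset ℕ => s.erase m) (fun s hs => ?_) (fun s hs t ht hst => ?_))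
  · obtain ⟨hs, hm⟩ := Finset.mem_filter.1 hs
    obtain ⟨hsum, hparts⟩ := mem_boundedRegularParts.1 hs
    refine mem_boundedRegularParts.2 ⟨hsum, fun i hi => ?_⟩
    have : i ≠ m := fun h => hm (h ▸ hi)
    obtain ⟨h0, hk, him⟩ := hparts i hi
    exact ⟨h0, hk, by omega⟩
  · obtain ⟨hs, hm⟩ := Finset.mem_filter.1 hs
    obtain ⟨hsum, hparts⟩ := mem_boundedRegularParts.1 hs
    refine mem_boundedRegularParts.2 ⟨?_, fun i hi => hparts i (Multiset.mem_of_mem_erase hi)⟩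
    have := Multiset.sum_erase hm
    dsimp only
    omega
  · rw [← Multiset.cons_erase (Finset.mem_filter.1 hs).2,
      ← Multiset.cons_erase (Finset.mem_filter.1 ht).2]
    exact congrArg _ hst

theorem card_boundedRegularParts_one_le (k n : ℕ) : #(boundedRegularParts k n 1) ≤ 1 := by
  have h : ∀ s ∈ boundedRegularParts k n 1, s = Multiset.replicate n 1 := by
    intro s hs
    obtain ⟨hsum, hparts⟩ := mem_boundedRegularParts.1 hs
    have hs1 : s = Multiset.replicate (Multiset.card s) 1 :=
      Multiset.eq_replicate_card.2 fun i hi => by have := hparts i hi; omega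
    rw [hs1, Multiset.sum_replicate, smul_eq_mul, mul_one] at hsum
    rwa [← hsum]
  exact card_le_one.2 fun s hs t ht => (h s hs).trans (h t ht).symm

theorem card_boundedRegularParts_two_le (k n : ℕ) : #(boundedRegularParts k n 2) ≤ n / 2 + 1 := by
  induction n using Nat.strong_induction_on with
  | _ n ih =>
  rcases lt_or_ge n 2 with hn | hn
  · calc #(boundedRegularParts k n 2) ≤ #(boundedRegularParts k n 1) :=
          card_le_card (boundedRegularParts_mono (by omega))
      _ ≤ n / 2 + 1 := (card_boundedRegularParts_one_le k n).trans (by omega)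
  · calc #(boundedRegularParts k n 2)
        ≤ #(boundedRegularParts k n 1) + #(boundedRegularParts k (n - 2) 2) :=
          card_boundedRegularParts_le_add k n 2
      _ ≤ 1 + ((n - 2) / 2 + 1) :=
          add_le_add (card_boundedRegularParts_one_le k n) (ih _ (by omega))
      _ = n / 2 + 1 := by omega

theorem card_boundedRegularParts_le_add_sum (k n m₀ m : ℕ) :
    #(boundedRegularParts k n m) ≤
      #(boundedRegularParts k n m₀) + ∑ j ∈ Ioc m₀ m, pk k (n - j) := by
  induction m with
  | zero =>
    rw [Ioc_eq_empty (by omega), sum_empty, add_zero]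
    exact card_le_card (boundedRegularParts_mono (by omega))
  | succ m ih =>
    rcases lt_or_ge m m₀ with h | h
    · rw [Ioc_eq_empty (by omega), sum_empty, add_zero]
      exact card_le_card (boundedRegularParts_mono (by omega))
    · rw [sum_Ioc_succ_top h, ← add_assoc]
      calc #(boundedRegularParts k n (m + 1))
          ≤ #(boundedRegularParts k n m) + #(boundedRegularParts k (n - (m + 1)) (m + 1)) :=
            card_boundedRegularParts_le_add k n (m + 1)
        _ ≤ _ := add_le_add ih (card_boundedRegularParts_le_pk _ _ _)

end BoundedRegularParts

theorem pk_four_le (n : ℕ) :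
    pk 4 n ≤ n / 2 + 1 + pk 4 (n - 3) + ∑ j ∈ Ioc 4 n, pk 4 (n - j) := by
  calc pk 4 n = #(boundedRegularParts 4 n n) := (card_boundedRegularParts_self 4 n).symm
    _ ≤ #(boundedRegularParts 4 n 4) + ∑ j ∈ Ioc 4 n, pk 4 (n - j) :=
        card_boundedRegularParts_le_add_sum 4 n 4 n
    _ ≤ #(boundedRegularParts 4 n 2) + #(boundedRegularParts 4 (n - 3) 3) +
          ∑ j ∈ Ioc 4 n, pk 4 (n - j) := by
        rw [boundedRegularParts_eq_pred_of_dvd (dvd_refl 4)]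
        gcongr
        exact card_boundedRegularParts_le_add 4 n 3
    _ ≤ _ := by
        gcongr
        · exact card_boundedRegularParts_two_le 4 n
        · exact card_boundedRegularParts_le_pk 4 (n - 3) 3

theorem two_le_pk_four_two : 2 ≤ pk 4 2 := by
  rw [← card_boundedRegularParts_self]
  calc 2 = #({{2}, {1, 1}} : Finset (Multiset ℕ)) := by decide
    _ ≤ _ := card_le_card fun s hs => by
      simp only [Finset.mem_insert, Finset.mem_singleton] at hs
      rcases hs with rfl | rfl <;> simp [mem_boundedRegularParts]

theorem three_le_pk_four_three : 3 ≤ pk 4 3 := by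
  rw [← card_boundedRegularParts_self]
  calc 3 = #({{3}, {2, 1}, {1, 1, 1}} : Finset (Multiset ℕ)) := by decide
    _ ≤ _ := card_le_card fun s hs => by
      simp only [Finset.mem_insert, Finset.mem_singleton] at hs
      rcases hs with rfl | rfl | rfl <;> simp [mem_boundedRegularParts]

/-- The largest product of the parts of a partition of `n`. -/
def maxPartProduct : ℕ → ℕ
  | 0 => 1
  | 1 => 1
  | 2 => 2
  | 3 => 3
  | 4 => 4
  | n + 5 => 3 * maxPartProduct (n + 2)

theorem maxPartProduct_add_three {n : ℕ} (hn : n ≠ 1) :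
    maxPartProduct (n + 3) = 3 * maxPartProduct n := by
  match n, hn with
  | 0, _ => rfl
  | n + 2, _ => rfl

theorem maxPartProduct_add_three_mul {n : ℕ} (hn : n ≠ 1) (q : ℕ) :
    maxPartProduct (n + 3 * q) = 3 ^ q * maxPartProduct n := by
  induction q with
  | zero => simp
  | succ q ih =>
    rw [show n + 3 * (q + 1) = n + 3 * q + 3 by ring, maxPartProduct_add_three (by omega), ih,
      pow_succ]
    ring

theorem maxPartProduct_mul_le (a b : ℕ) :
    maxPartProduct a * maxPartProduct b ≤ maxPartProduct (a + b) := by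
  induction a using Nat.strong_induction_on generalizing b with
  | _ a iha =>
  induction b using Nat.strong_induction_on with
  | _ b ihb =>
  rcases le_or_gt a 4 with ha | ha
  · rcases le_or_gt b 4 with hb | hb
    · interval_cases a <;> interval_cases b <;> decide
    · obtain ⟨c, rfl⟩ : ∃ c, b = c + 3 := ⟨b - 3, by omega⟩
      rw [maxPartProduct_add_three (n := c) (by omega), ← add_assoc,
        maxPartProduct_add_three (n := a + c) (by omega), mul_left_comm]
      exact Nat.mul_le_mul_left 3 (ihb c (by omega))
  · obtain ⟨c, rfl⟩ : ∃ c, a = c + 3 := ⟨a - 3, by omega⟩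
    rw [maxPartProduct_add_three (n := c) (by omega), add_right_comm,
      maxPartProduct_add_three (n := c + b) (by omega), mul_assoc]
    exact Nat.mul_le_mul_left 3 (iha c (by omega) b)

theorem maxPartProduct_add_one_add_maxPartProduct_add_three_le (r : ℕ) :
    maxPartProduct (r + 1) + maxPartProduct (r + 3) + 2 ≤ 3 * maxPartProduct (r + 2) := by
  induction r using Nat.strong_induction_on with
  | _ r ih =>
  rcases le_or_gt r 3 with hr | hr
  · interval_cases r <;> decide
  · obtain ⟨t, rfl⟩ : ∃ t, r = t + 3 := ⟨r - 3, by omega⟩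
    have := ih t (by omega)
    rw [show t + 3 + 1 = t + 1 + 3 by ring, show t + 3 + 2 = t + 2 + 3 by ring,
      maxPartProduct_add_three (n := t + 1) (by omega),
      maxPartProduct_add_three (n := t + 2) (by omega),
      maxPartProduct_add_three (n := t + 3) (by omega)]
    omega

theorem sum_range_maxPartProduct_add_le (r : ℕ) :
    ∑ i ∈ range (r + 1), maxPartProduct i + (r + 5) / 2 + 1 ≤ 2 * maxPartProduct (r + 2) := by
  induction r using Nat.strong_induction_on with
  | _ r ih =>
  rcases le_or_gt r 2 with hr | hr
  · interval_cases r <;> decide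
  · obtain ⟨t, rfl⟩ : ∃ t, r = t + 3 := ⟨r - 3, by omega⟩
    have := ih t (by omega)
    have := maxPartProduct_add_one_add_maxPartProduct_add_three_le t
    rw [show t + 3 + 2 = t + 2 + 3 by ring, maxPartProduct_add_three (n := t + 2) (by omega),
      sum_range_succ, sum_range_succ, sum_range_succ]
    omega

theorem half_add_sum_maxPartProduct_le {n : ℕ} (hn : 3 ≤ n) :
    n / 2 + 1 + maxPartProduct (n - 3) + ∑ j ∈ Ioc 4 n, maxPartProduct (n - j) ≤
      maxPartProduct n := by
  rcases le_or_gt n 4 with h4 | h4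
  · rw [Ioc_eq_empty (by omega)]
    interval_cases n <;> decide
  · obtain ⟨r, rfl⟩ : ∃ r, n = r + 5 := ⟨n - 5, by omega⟩
    have hsum : ∑ j ∈ Ioc 4 (r + 5), maxPartProduct (r + 5 - j) =
        ∑ i ∈ range (r + 1), maxPartProduct i := by
      rw [← Ico_add_one_add_one_eq_Ioc, sum_Ico_reflect _ _ (by omega), range_eq_Ico,
        show r + 5 + 1 - (r + 5 + 1) = 0 by omega, show r + 5 + 1 - (4 + 1) = r + 1 by omega]
    have := sum_range_maxPartProduct_add_le r
    rw [hsum, show r + 5 = r + 2 + 3 by ring, maxPartProduct_add_three (n := r + 2) (by omega),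
      show r + 2 + 3 - 3 = r + 2 by omega]
    omega

theorem pk_four_le_maxPartProduct (n : ℕ) : pk 4 n ≤ maxPartProduct n := by
  induction n using Nat.strong_induction_on with
  | _ n ih =>
  rcases lt_or_ge n 3 with hn | hn
  · calc pk 4 n = #(boundedRegularParts 4 n n) := (card_boundedRegularParts_self 4 n).symm
      _ ≤ #(boundedRegularParts 4 n 2) := card_le_card (boundedRegularParts_mono (by omega))
      _ ≤ n / 2 + 1 := card_boundedRegularParts_two_le 4 n
      _ ≤ maxPartProduct n := by interval_cases n <;> decide
  · calc pk 4 n ≤ n / 2 + 1 + pk 4 (n - 3) + ∑ j ∈ Ioc 4 n, pk 4 (n - j) := pk_four_le n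
      _ ≤ n / 2 + 1 + maxPartProduct (n - 3) + ∑ j ∈ Ioc 4 n, maxPartProduct (n - j) := by
        gcongr with j hj
        · exact ih _ (by omega)
        · exact ih _ (by simp only [Finset.mem_Ioc] at hj; omega)
      _ ≤ maxPartProduct n := half_add_sum_maxPartProduct_le hn

theorem prod_map_pk_four_le (s : Multiset ℕ) :
    (s.map (pk 4)).prod ≤ maxPartProduct s.sum := by
  induction s using Multiset.induction_on with
  | empty => rfl
  | cons a s ih =>
    rw [Multiset.map_cons, Multiset.prod_cons, Multiset.sum_cons]
    exact (Nat.mul_le_mul (pk_four_le_maxPartProduct a) ih).trans (maxPartProduct_mul_le _ _)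

def regularProducts (k n : ℕ) : Set ℕ :=
  {m | ∃ μ : n.Partition, (∀ i ∈ μ.parts, ¬ k ∣ i) ∧ pkext k μ = m}

theorem prod_map_pk_mem_regularProducts {k n : ℕ} {s : Multiset ℕ} (hsum : s.sum = n)
    (hs : ∀ i ∈ s, 0 < i ∧ ¬ k ∣ i) : (s.map (pk k)).prod ∈ regularProducts k n :=
  ⟨⟨s, fun hi => (hs _ hi).1, hsum⟩, fun i hi => (hs i hi).2, rfl⟩

theorem le_maxPartProduct_of_mem_regularProducts {n m : ℕ} (hm : m ∈ regularProducts 4 n) :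
    m ≤ maxPartProduct n := by
  obtain ⟨μ, -, rfl⟩ := hm
  simpa only [pkext, μ.parts_sum] using prod_map_pk_four_le μ.parts

theorem isGreatest_regularProducts_four (a b : ℕ) (ha : a ≤ 2) :
    IsGreatest (regularProducts 4 (2 * a + 3 * b)) (2 ^ a * 3 ^ b) := by
  have hF : maxPartProduct (2 * a + 3 * b) = 2 ^ a * 3 ^ b := by
    rw [maxPartProduct_add_three_mul (by omega), mul_comm]
    interval_cases a <;> rfl
  have hupper : ∀ m ∈ regularProducts 4 (2 * a + 3 * b), m ≤ 2 ^ a * 3 ^ b :=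
    fun m hm => (le_maxPartProduct_of_mem_regularProducts hm).trans_eq hF
  set s := Multiset.replicate a 2 + Multiset.replicate b 3
  have hmem : (s.map (pk 4)).prod ∈ regularProducts 4 (2 * a + 3 * b) :=
    prod_map_pk_mem_regularProducts (by simp [s, mul_comm]) fun i hi => by
      rcases Multiset.mem_add.1 hi with hi | hi <;>
        · rw [Multiset.eq_of_mem_replicate hi]; omega
  have hlower : 2 ^ a * 3 ^ b ≤ (s.map (pk 4)).prod := by
    simp only [s, Multiset.map_add, Multiset.map_replicate, Multiset.prod_add,
      Multiset.prod_replicate]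
    exact Nat.mul_le_mul (Nat.pow_le_pow_left two_le_pk_four_two a)
      (Nat.pow_le_pow_left three_le_pk_four_three b)
  refine ⟨?_, hupper⟩
  rwa [← le_antisymm (hupper _ hmem) hlower]

theorem maxp4_formula (n : ℕ) (hn : 2 ≤ n) :
    (n % 3 = 0 →
      IsGreatest {m : ℕ | ∃ μ : n.Partition, (∀ i ∈ μ.parts, ¬ 4 ∣ i) ∧ pkext 4 μ = m}
        (3 ^ (n / 3))) ∧
    (n % 3 = 1 →
      IsGreatest {m : ℕ | ∃ μ : n.Partition, (∀ i ∈ μ.parts, ¬ 4 ∣ i) ∧ pkext 4 μ = m}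
        (4 * 3 ^ ((n - 4) / 3))) ∧
    (n % 3 = 2 →
      IsGreatest {m : ℕ | ∃ μ : n.Partition, (∀ i ∈ μ.parts, ¬ 4 ∣ i) ∧ pkext 4 μ = m}
        (2 * 3 ^ ((n - 2) / 3))) := by
  have key (a b : ℕ) (ha : a ≤ 2) (hab : 2 * a + 3 * b = n) :
      IsGreatest (regularProducts 4 n) (2 ^ a * 3 ^ b) :=
    hab ▸ isGreatest_regularProducts_four a b ha
  refine ⟨fun h => ?_, fun h => ?_, fun h => ?_⟩
  · have := key 0 (n / 3) (by norm_num) (by omega)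
    rwa [pow_zero, one_mul] at this
  · have := key 2 ((n - 4) / 3) le_rfl (by omega)
    rwa [show 2 ^ 2 = 4 by rfl] at this
  · have := key 1 ((n - 2) / 3) (by norm_num) (by omega)
    rwa [pow_one] at this
end

section
/- For every integer n ≥ 2: maxp_5(n) = 5^(n/4) if n ≡ 0 (mod 4), maxp_5(n) = 6 · 5^((n-5)/4) if n ≡ 1 (mod 4), maxp_5(n) = 2 · 5^((n-2)/4) if n ≡ 2 (mod 4), and maxp_5(n) = 3 · 5^((n-3)/4) if n ≡ 3 (mod 4). -/
/-!
Let `maxp5` be the sequence `1, 1, 2, 3, 5, 6` continued by `maxp5 (n + 4) = 5 * maxp5 n`. It is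
supermultiplicative and dominates `p₅` pointwise, so `pkext 5 μ ≤ maxp5 n` for every partition
`μ` of `n`; it is attained by parts `4` (`p₅(4) = 5`) together with a part `2`, a part `3`, or
both. The pointwise bound `p₅(n) ≤ maxp5 n` is a computation for `n ≤ 38`. For larger `n` it
follows from the generating function: counting by smallest part gives
`p₅(n) ≤ (4/3)^n ∏_{j ≥ 1} (1 - (3/4)^j)⁻¹`, and as `(4/3)^4 < 5` this bound stays below
`maxp5 n` once it is below it for four consecutive values of `n` (here `n = 39, …, 42`).
-/

open Finset

def regCountFrom (k n s : ℕ) : ℕ :=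
  #{μ : n.Partition | ∀ i ∈ μ.parts, ¬ k ∣ i ∧ s ≤ i}

theorem pk_eq_regCountFrom_one (k n : ℕ) : pk k n = regCountFrom k n 1 := by
  rw [pk, regCountFrom, Fintype.card_subtype]
  congr 1
  ext μ
  simp only [mem_filter, mem_univ, true_and]
  exact forall₂_congr fun i hi => (and_iff_left (μ.parts_pos hi)).symm

theorem regCountFrom_zero (k s : ℕ) : regCountFrom k 0 s = 1 := by
  rw [regCountFrom, filter_true_of_mem, card_univ, Fintype.card_unique]
  intro μ _
  simp

theorem regCountFrom_eq_zero_of_lt {k n s : ℕ} (hn : 0 < n) (hns : n < s) :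
    regCountFrom k n s = 0 := by
  rw [regCountFrom, card_eq_zero, filter_eq_empty_iff]
  intro μ _ hμ
  have hμ0 : μ.parts ≠ 0 := fun h => by
    have := μ.parts_sum
    rw [h, Multiset.sum_zero] at this
    omega
  obtain ⟨i, hi⟩ := Multiset.exists_mem_of_ne_zero hμ0
  exact (μ.le_of_mem_parts hi).not_gt (hns.trans_le (hμ i hi).2)

theorem regCountFrom_succ_of_dvd {k n s : ℕ} (hks : k ∣ s) :
    regCountFrom k n (s + 1) = regCountFrom k n s := by
  rw [regCountFrom, regCountFrom]
  congr 1
  refine filter_congr fun μ _ => forall₂_congr fun i _ => ?_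
  constructor
  · exact fun ⟨hk, hs⟩ => ⟨hk, by omega⟩
  · rintro ⟨hk, hs⟩
    refine ⟨hk, Nat.lt_of_le_of_ne hs ?_⟩
    rintro rfl
    exact hk hks

theorem card_filter_mem_parts_eq_regCountFrom_sub {k n s : ℕ} (hs : 0 < s) (hsn : s ≤ n)
    (hks : ¬ k ∣ s) :
    #{μ : n.Partition | (∀ i ∈ μ.parts, ¬ k ∣ i ∧ s ≤ i) ∧ s ∈ μ.parts} =
      regCountFrom k (n - s) s := by
  set e := Nat.Partition.partitionWithPartEquiv hs hsn
  refine card_bij' (fun μ hμ => e ⟨μ, (mem_filter.1 hμ).2.2⟩) (fun ν _ => (e.symm ν).1)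
    ?_ ?_ ?_ ?_
  · intro μ hμ
    simp only [mem_filter, mem_univ, true_and] at hμ ⊢
    simp only [e, Nat.Partition.partitionWithPartEquiv_apply_parts]
    exact fun i hi => hμ.1 i (Multiset.mem_of_mem_erase hi)
  · intro ν hν
    simp only [mem_filter, mem_univ, true_and] at hν ⊢
    simp only [e, Nat.Partition.partitionWithPartEquiv_symm_apply_parts, Multiset.mem_cons,
      forall_eq_or_imp, true_or, and_true]
    exact ⟨⟨hks, le_rfl⟩, hν⟩
  · intro μ _
    simp [e]
  · intro ν _
    simp [e]

theorem regCountFrom_eq_add {k n s : ℕ} (hs : 0 < s) (hsn : s ≤ n) (hks : ¬ k ∣ s) :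
    regCountFrom k n s = regCountFrom k (n - s) s + regCountFrom k n (s + 1) := by
  rw [← card_filter_mem_parts_eq_regCountFrom_sub hs hsn hks, regCountFrom, regCountFrom,
    ← card_filter_add_card_filter_not (fun μ : n.Partition => s ∈ μ.parts), filter_filter,
    filter_filter]
  congr 2
  refine filter_congr fun μ _ => ⟨fun ⟨hμ, hsμ⟩ i hi => ⟨(hμ i hi).1, ?_⟩, fun hμ => ⟨?_, ?_⟩⟩
  · exact lt_of_le_of_ne (hμ i hi).2 (by rintro rfl; exact hsμ hi)
  · exact fun i hi => ⟨(hμ i hi).1, by have := (hμ i hi).2; omega⟩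
  · exact fun hsμ => (Nat.lt_irrefl s) (hμ s hsμ).2

theorem regCountFrom_succ_of_lt {k n s : ℕ} (hns : n < s) :
    regCountFrom k n (s + 1) = regCountFrom k n s := by
  rcases Nat.eq_zero_or_pos n with rfl | hn
  · rw [regCountFrom_zero, regCountFrom_zero]
  · rw [regCountFrom_eq_zero_of_lt hn hns, regCountFrom_eq_zero_of_lt hn (by omega)]

theorem regCountFrom_eq_sum {k s : ℕ} (hs : 0 < s) (hks : ¬ k ∣ s) (n : ℕ) :
    regCountFrom k n s = ∑ j ∈ range (n / s + 1), regCountFrom k (n - j * s) (s + 1) := by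
  induction n using Nat.strong_induction_on with
  | _ n ih =>
    rcases lt_or_ge n s with hns | hsn
    · simp [Nat.div_eq_of_lt hns, regCountFrom_succ_of_lt hns]
    · rw [regCountFrom_eq_add hs hsn hks, ih (n - s) (by omega), Nat.div_eq_sub_div hs hsn,
        sum_range_succ' _ ((n - s) / s + 1)]
      congr 1
      · exact sum_congr rfl fun j _ => by rw [Nat.sub_sub, add_one_mul, add_comm s]
      · simp

/-- The recursion `regCountFrom_eq_sum` tabulated row by row, from `s = N + 1` down to `s = 1`
(row `t` holds `s = N + 1 - t`), so that small values of `pk` can be evaluated by the kernel. -/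
def regRow (k N : ℕ) : ℕ → List ℕ
  | 0 => (List.range (N + 1)).map fun n => if n = 0 then 1 else 0
  | t + 1 =>
    let row := regRow k N t
    (List.range (N + 1)).map fun n =>
      if k ∣ N - t then row.getD n 0
      else ∑ j ∈ range (n / (N - t) + 1), row.getD (n - j * (N - t)) 0

theorem getD_regRow {k N t n : ℕ} (ht : t ≤ N) (hn : n ≤ N) :
    (regRow k N t).getD n 0 = regCountFrom k n (N + 1 - t) := by
  induction t generalizing n with
  | zero =>
    simp only [regRow, List.getD_eq_getElem?_getD, List.getElem?_map,
      List.getElem?_range (Nat.lt_succ_of_le hn), Option.map_some, Option.getD_some]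
    split_ifs with h0
    · rw [h0, regCountFrom_zero]
    · rw [regCountFrom_eq_zero_of_lt (Nat.pos_of_ne_zero h0) (by omega)]
  | succ t ih =>
    have hs : N + 1 - (t + 1) = N - t := by omega
    have hs' : N + 1 - t = N - t + 1 := by omega
    simp only [regRow, List.getD_eq_getElem?_getD, List.getElem?_map,
      List.getElem?_range (Nat.lt_succ_of_le hn), Option.map_some, Option.getD_some, hs]
    simp only [← List.getD_eq_getElem?_getD]
    split_ifs with hks
    · rw [ih (by omega) hn, hs', regCountFrom_succ_of_dvd hks]
    · rw [regCountFrom_eq_sum (by omega) hks]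
      exact sum_congr rfl fun j _ => by rw [ih (by omega) (by omega), hs']

theorem pk_eq_getD_regRow {k N n : ℕ} (hn : n ≤ N) : pk k n = (regRow k N N).getD n 0 := by
  rw [pk_eq_regCountFrom_one, getD_regRow le_rfl hn, Nat.add_sub_cancel_left]

section TailWeight

variable {α : Type*} [Field α] [LinearOrder α] [IsStrictOrderedRing α]

/-- An upper bound for `∏_{j ≥ s} (1 - x ^ j)⁻¹`: the factors below `s₀` are kept, and the rest
are bounded using `∏_{j ≥ m} (1 - x ^ j) ≥ 1 - ∑_{j ≥ m} x ^ j = 1 - x ^ m / (1 - x)`. -/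
def tailWeight (x : α) (s₀ s : ℕ) : α :=
  (∏ j ∈ Ico s s₀, (1 - x ^ j))⁻¹ * (1 - x ^ max s s₀ / (1 - x))⁻¹

variable {x : α} {s₀ : ℕ}

theorem one_le_tailWeight (hx0 : 0 ≤ x) (hx1 : x < 1) (hs₀ : x ^ s₀ < 1 - x) {s : ℕ}
    (hs : 0 < s) : 1 ≤ tailWeight x s₀ s := by
  have hfactor : ∀ j ∈ Ico s s₀, 0 < 1 - x ^ j := fun j hj =>
    sub_pos.2 (pow_lt_one₀ hx0 hx1 (by have := (mem_Ico.1 hj).1; omega))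
  have h1x : 0 < 1 - x := sub_pos.2 hx1
  rw [tailWeight]
  refine one_le_mul_of_one_le_of_one_le ((one_le_inv₀ (prod_pos hfactor)).2 ?_)
    ((one_le_inv₀ (sub_pos.2 ((div_lt_one h1x).2 ?_))).2 ?_)
  · exact prod_le_one (fun j hj => (hfactor j hj).le) fun j _ => sub_le_self _ (pow_nonneg hx0 _)
  · exact (pow_le_pow_of_le_one hx0 hx1.le (le_max_right s s₀)).trans_lt hs₀
  · exact sub_le_self _ (div_nonneg (pow_nonneg hx0 _) h1x.le)

theorem tailWeight_succ_le (hx0 : 0 ≤ x) (hx1 : x < 1) (hs₀ : x ^ s₀ < 1 - x) {s : ℕ}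
    (hs : 0 < s) : tailWeight x s₀ (s + 1) ≤ tailWeight x s₀ s * (1 - x ^ s) := by
  have hxs : x ^ s < 1 := pow_lt_one₀ hx0 hx1 hs.ne'
  have h1x : 0 < 1 - x := sub_pos.2 hx1
  rcases lt_or_ge s s₀ with hss₀ | hs₀s
  · rw [tailWeight, tailWeight, prod_eq_prod_Ico_succ_bot hss₀, max_eq_right hss₀.le,
      max_eq_right hss₀]
    have := (sub_pos.2 hxs).ne'
    apply le_of_eq
    field_simp
  · have hy : x ^ s < 1 - x := (pow_le_pow_of_le_one hx0 hx1.le hs₀s).trans_lt hs₀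
    rw [tailWeight, tailWeight, Ico_eq_empty_of_le hs₀s, Ico_eq_empty_of_le (by omega),
      max_eq_left hs₀s, max_eq_left (by omega), prod_empty, inv_one, one_mul, one_mul, pow_succ',
      one_sub_div h1x.ne', one_sub_div h1x.ne', inv_div, inv_div, div_mul_eq_mul_div,
      div_le_div_iff₀ (by nlinarith [pow_nonneg hx0 s]) (sub_pos.2 hy)]
    nlinarith [mul_nonneg (mul_nonneg h1x.le hx0) (sq_nonneg (x ^ s))]

theorem regCountFrom_mul_pow_le (k : ℕ) (hx0 : 0 ≤ x) (hx1 : x < 1) (hs₀ : x ^ s₀ < 1 - x)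
    (n : ℕ) {s : ℕ} (hs : 0 < s) : (regCountFrom k n s : α) * x ^ n ≤ tailWeight x s₀ s := by
  have hW := one_le_tailWeight hx0 hx1 hs₀ hs
  rcases Nat.eq_zero_or_pos n with rfl | hn
  · simpa [regCountFrom_zero] using hW
  rcases lt_or_ge n s with hns | hsn
  · simpa [regCountFrom_eq_zero_of_lt hn hns] using zero_le_one.trans hW
  have hnext := regCountFrom_mul_pow_le k hx0 hx1 hs₀ n (by omega : 0 < s + 1)
  have hstep := tailWeight_succ_le hx0 hx1 hs₀ hs
  by_cases hks : k ∣ s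
  · rw [← regCountFrom_succ_of_dvd hks]
    nlinarith [pow_nonneg hx0 s]
  · have hrest := regCountFrom_mul_pow_le k hx0 hx1 hs₀ (n - s) hs
    have hpow : x ^ n = x ^ (n - s) * x ^ s := by rw [← pow_add, Nat.sub_add_cancel hsn]
    rw [regCountFrom_eq_add hs hsn hks, Nat.cast_add, add_mul]
    calc _ = (regCountFrom k (n - s) s * x ^ (n - s)) * x ^ s
          + regCountFrom k n (s + 1) * x ^ n := by rw [hpow]; ring
      _ ≤ tailWeight x s₀ s * x ^ s + tailWeight x s₀ (s + 1) :=
          add_le_add (mul_le_mul_of_nonneg_right hrest (pow_nonneg hx0 s)) hnext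
      _ ≤ tailWeight x s₀ s * x ^ s + tailWeight x s₀ s * (1 - x ^ s) := by gcongr
      _ = tailWeight x s₀ s := by ring
termination_by 2 * n + 1 - s
decreasing_by all_goals omega

end TailWeight

def maxp5 : ℕ → ℕ
  | 0 => 1 | 1 => 1 | 2 => 2 | 3 => 3 | 4 => 5 | 5 => 6
  | n + 6 => 5 * maxp5 (n + 2)

theorem maxp5_add_four {n : ℕ} (hn : 2 ≤ n) : maxp5 (n + 4) = 5 * maxp5 n := by
  obtain ⟨m, rfl⟩ := Nat.exists_eq_add_of_le' hn
  rfl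

theorem maxp5_mul_le_maxp5_add (a b : ℕ) : maxp5 a * maxp5 b ≤ maxp5 (a + b) := by
  by_cases ha : 6 ≤ a
  · have := maxp5_mul_le_maxp5_add (a - 4) b
    rw [← Nat.sub_add_cancel (by omega : 4 ≤ a), maxp5_add_four (by omega),
      show a - 4 + 4 + b = a - 4 + b + 4 by omega, maxp5_add_four (by omega)]
    nlinarith
  by_cases hb : 6 ≤ b
  · have := maxp5_mul_le_maxp5_add a (b - 4)
    rw [← Nat.sub_add_cancel (by omega : 4 ≤ b), maxp5_add_four (by omega),
      ← add_assoc, maxp5_add_four (by omega)]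
    nlinarith
  have hsmall : ∀ a < 6, ∀ b < 6, maxp5 a * maxp5 b ≤ maxp5 (a + b) := by decide
  exact hsmall a (by omega) b (by omega)
termination_by a + b

theorem maxp5_four_mul (k : ℕ) : maxp5 (4 * k) = 5 ^ k := by
  induction k with
  | zero => rfl
  | succ k ih =>
    rcases k with _ | k
    · rfl
    · rw [mul_add_one, maxp5_add_four (by omega), ih, pow_succ]
      ring

theorem maxp5_four_mul_add_five (k : ℕ) : maxp5 (4 * k + 5) = 6 * 5 ^ k := by
  induction k with
  | zero => rfl
  | succ k ih => rw [mul_add_one, add_right_comm, maxp5_add_four (by omega), ih, pow_succ]; ring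

theorem maxp5_four_mul_add_two (k : ℕ) : maxp5 (4 * k + 2) = 2 * 5 ^ k := by
  induction k with
  | zero => rfl
  | succ k ih => rw [mul_add_one, add_right_comm, maxp5_add_four (by omega), ih, pow_succ]; ring

theorem maxp5_four_mul_add_three (k : ℕ) : maxp5 (4 * k + 3) = 3 * 5 ^ k := by
  induction k with
  | zero => rfl
  | succ k ih => rw [mul_add_one, add_right_comm, maxp5_add_four (by omega), ih, pow_succ]; ring

theorem tailWeight_le_maxp5_mul_pow {n : ℕ} (hn : 39 ≤ n) :
    tailWeight (3 / 4 : ℚ) 8 1 ≤ maxp5 n * (3 / 4) ^ n := by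
  by_cases hbase : n ≤ 42
  · have h : ∀ m ∈ Icc 39 42, tailWeight (3 / 4 : ℚ) 8 1 ≤ maxp5 m * (3 / 4) ^ m := by
      decide +kernel
    exact h n (mem_Icc.2 ⟨hn, hbase⟩)
  · obtain ⟨m, rfl⟩ : ∃ m, n = m + 4 := ⟨n - 4, by omega⟩
    calc tailWeight (3 / 4 : ℚ) 8 1 ≤ maxp5 m * (3 / 4) ^ m :=
          tailWeight_le_maxp5_mul_pow (by omega)
      _ ≤ maxp5 m * (3 / 4) ^ m * (5 * (3 / 4) ^ 4) :=
          le_mul_of_one_le_right (by positivity) (by norm_num)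
      _ = maxp5 (m + 4) * (3 / 4) ^ (m + 4) := by
          rw [maxp5_add_four (by omega)]
          push_cast
          ring
termination_by n

theorem pk_five_le_maxp5 (n : ℕ) : pk 5 n ≤ maxp5 n := by
  by_cases hn : n ≤ 38
  · have h : ∀ m ≤ 38, (regRow 5 38 38).getD m 0 ≤ maxp5 m := by decide +kernel
    rw [pk_eq_getD_regRow hn]
    exact h n hn
  · have hpk := regCountFrom_mul_pow_le 5 (by norm_num : (0 : ℚ) ≤ 3 / 4) (by norm_num)
      (by norm_num : (3 / 4 : ℚ) ^ 8 < 1 - 3 / 4) n one_pos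
    rw [← pk_eq_regCountFrom_one] at hpk
    have := hpk.trans (tailWeight_le_maxp5_mul_pow (n := n) (by omega))
    exact_mod_cast le_of_mul_le_mul_right this (pow_pos (by norm_num) n)

theorem prod_map_pk_five_le_maxp5 (M : Multiset ℕ) : (M.map (pk 5)).prod ≤ maxp5 M.sum := by
  induction M using Multiset.induction with
  | empty => rfl
  | cons a M ih =>
    rw [Multiset.map_cons, Multiset.prod_cons, Multiset.sum_cons]
    exact (Nat.mul_le_mul (pk_five_le_maxp5 a) ih).trans (maxp5_mul_le_maxp5_add a M.sum)

theorem pkext_five_le_maxp5 {n : ℕ} (μ : n.Partition) : pkext 5 μ ≤ maxp5 n :=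
  (prod_map_pk_five_le_maxp5 μ.parts).trans_eq (congrArg maxp5 μ.parts_sum)

theorem pk_five_eq_maxp5 {n : ℕ} (hn : n ≤ 4) : pk 5 n = maxp5 n := by
  have h : ∀ m ≤ 4, (regRow 5 4 4).getD m 0 = maxp5 m := by decide +kernel
  rw [pk_eq_getD_regRow hn, h n hn]

theorem exists_pkext_eq_mul_of_add_part {k a n m : ℕ} (ha : 0 < a) (han : a ≤ n) (hka : ¬ k ∣ a)
    (h : ∃ ν : (n - a).Partition, (∀ i ∈ ν.parts, ¬ k ∣ i) ∧ pkext k ν = m) :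
    ∃ μ : n.Partition, (∀ i ∈ μ.parts, ¬ k ∣ i) ∧ pkext k μ = pk k a * m := by
  obtain ⟨ν, hν, rfl⟩ := h
  refine ⟨((Nat.Partition.partitionWithPartEquiv ha han).symm ν).1, ?_, ?_⟩
  · simpa using ⟨hka, hν⟩
  · simp [pkext]

theorem exists_regular_pkext_eq_maxp5 {n : ℕ} (hn : 2 ≤ n) :
    ∃ μ : n.Partition, (∀ i ∈ μ.parts, ¬ 5 ∣ i) ∧ pkext 5 μ = maxp5 n := by
  rcases le_or_gt n 4 with h4 | h4
  · refine ⟨Nat.Partition.indiscrete n, ?_, ?_⟩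
    · rw [Nat.Partition.indiscrete_parts (by omega)]
      simp only [Multiset.mem_singleton, forall_eq]
      omega
    · rw [pkext, Nat.Partition.indiscrete_parts (by omega), Multiset.map_singleton,
        Multiset.prod_singleton, pk_five_eq_maxp5 h4]
  rcases lt_or_ge n 6 with h6 | h6
  · obtain rfl : n = 5 := by omega
    have := exists_pkext_eq_mul_of_add_part (k := 5) (a := 2) (n := 5) (by norm_num)
      (by norm_num) (by norm_num) (exists_regular_pkext_eq_maxp5 (n := 3) (by norm_num))
    rwa [pk_five_eq_maxp5 (by norm_num)] at this
  · obtain ⟨m, rfl⟩ : ∃ m, n = m + 4 := ⟨n - 4, by omega⟩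
    have := exists_pkext_eq_mul_of_add_part (k := 5) (a := 4) (n := m + 4) (by norm_num)
      (by omega) (by norm_num) (exists_regular_pkext_eq_maxp5 (n := m) (by omega))
    rw [pk_five_eq_maxp5 le_rfl] at this
    rwa [maxp5_add_four (by omega)]
termination_by n

theorem isGreatest_pkext_five {n : ℕ} (hn : 2 ≤ n) :
    IsGreatest {m : ℕ | ∃ μ : n.Partition, (∀ i ∈ μ.parts, ¬ 5 ∣ i) ∧ pkext 5 μ = m}
      (maxp5 n) :=
  ⟨exists_regular_pkext_eq_maxp5 hn, by rintro _ ⟨μ, -, rfl⟩; exact pkext_five_le_maxp5 μ⟩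

theorem maxp5_formula (n : ℕ) (hn : 2 ≤ n) :
    (n % 4 = 0 →
      IsGreatest {m : ℕ | ∃ μ : n.Partition, (∀ i ∈ μ.parts, ¬ 5 ∣ i) ∧ pkext 5 μ = m}
        (5 ^ (n / 4))) ∧
    (n % 4 = 1 →
      IsGreatest {m : ℕ | ∃ μ : n.Partition, (∀ i ∈ μ.parts, ¬ 5 ∣ i) ∧ pkext 5 μ = m}
        (6 * 5 ^ ((n - 5) / 4))) ∧
    (n % 4 = 2 →
      IsGreatest {m : ℕ | ∃ μ : n.Partition, (∀ i ∈ μ.parts, ¬ 5 ∣ i) ∧ pkext 5 μ = m}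
        (2 * 5 ^ ((n - 2) / 4))) ∧
    (n % 4 = 3 →
      IsGreatest {m : ℕ | ∃ μ : n.Partition, (∀ i ∈ μ.parts, ¬ 5 ∣ i) ∧ pkext 5 μ = m}
        (3 * 5 ^ ((n - 3) / 4))) := by
  have key := isGreatest_pkext_five hn
  refine ⟨fun h => ?_, fun h => ?_, fun h => ?_, fun h => ?_⟩
  · obtain ⟨k, rfl⟩ : ∃ k, n = 4 * k := ⟨n / 4, by omega⟩
    rwa [show 4 * k / 4 = k by omega, ← maxp5_four_mul]
  · obtain ⟨k, rfl⟩ : ∃ k, n = 4 * k + 5 := ⟨(n - 5) / 4, by omega⟩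
    rwa [show (4 * k + 5 - 5) / 4 = k by omega, ← maxp5_four_mul_add_five]
  · obtain ⟨k, rfl⟩ : ∃ k, n = 4 * k + 2 := ⟨n / 4, by omega⟩
    rwa [show (4 * k + 2 - 2) / 4 = k by omega, ← maxp5_four_mul_add_two]
  · obtain ⟨k, rfl⟩ : ∃ k, n = 4 * k + 3 := ⟨n / 4, by omega⟩
    rwa [show (4 * k + 3 - 3) / 4 = k by omega, ← maxp5_four_mul_add_three]
end

section
/- For every integer n ≥ 2: maxp_6(n) = 5^(n/4) if n ≡ 0 (mod 4), maxp_6(n) = 7 · 5^((n-5)/4) if n ≡ 1 (mod 4), maxp_6(n) = 2 · 5^((n-2)/4) if n ≡ 2 (mod 4), and maxp_6(n) = 3 · 5^((n-3)/4) if n ≡ 3 (mod 4). -/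
/-!
The claimed maximum `maxp6` is supermultiplicative, so it suffices to prove `pk 6 n ≤ maxp6 n`;
it is attained by one part `2, 3, 4` or `5` (with `p₆ = 2, 3, 5, 7`) and further parts `4`.

For the bound, let `regCount 6 k n` count the `6`-regular partitions of `n` with all parts `≥ k`.
It satisfies `regCount 6 k n = regCount 6 (k + 1) n + regCount 6 k (n - k)` for `6 ∤ k`, and a
table of constants `layerBound k (n % 4)` turns this recurrence into an induction on `n` proving
`5 ^ 8 * regCount 6 k n ≤ layerBound k (n % 4) * 5 ^ (n / 4)` for `1 ≤ k ≤ 14` and `n ≥ 21`,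
the base cases being computed. For `k = 14` the bound follows from listing the parts in
decreasing order: the `i`-th part is at most `n / i`, which gives `regCount 6 14 n ≤ 112 ^ (n / 14)`,
and 112^(1/14) < 5^(1/4).
-/

open Finset
open scoped Nat

theorem le_induction_by_period {P : ℕ → Prop} {a p : ℕ} (hp : 0 < p)
    (base : ∀ n, a ≤ n → n < a + p → P n) (step : ∀ n, a ≤ n → P n → P (n + p)) :
    ∀ n, a ≤ n → P n := by
  intro n
  induction n using Nat.strong_induction_on with
  | _ n ih =>
    intro hn
    by_cases h : n < a + p
    · exact base n hn h
    · have := step (n - p) (by omega) (ih (n - p) (by omega) (by omega))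
      rwa [Nat.sub_add_cancel (by omega)] at this

def regCount (d k n : ℕ) : ℕ :=
  Fintype.card {μ : n.Partition // ∀ i ∈ μ.parts, ¬ d ∣ i ∧ k ≤ i}

theorem pk_eq_regCount_one (d n : ℕ) : pk d n = regCount d 1 n :=
  Fintype.card_congr <| Equiv.subtypeEquivRight fun μ =>
    ⟨fun h i hi => ⟨h i hi, μ.parts_pos hi⟩, fun h i hi => (h i hi).1⟩

theorem regCount_zero_right (d k : ℕ) : regCount d k 0 = 1 :=
  Fintype.card_eq_one_iff.2
    ⟨⟨default, fun _ hi =>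
      absurd (Nat.Partition.le_of_mem_parts hi) (Nat.Partition.parts_pos _ hi).not_ge⟩,
      fun _ => Subsingleton.elim _ _⟩

theorem regCount_eq_zero_of_lt {d k n : ℕ} (hn : n ≠ 0) (hnk : n < k) : regCount d k n = 0 := by
  refine Fintype.card_eq_zero_iff.2 ⟨fun ⟨μ, hμ⟩ => ?_⟩
  have hne : μ.parts ≠ 0 := fun h => hn (by rw [← μ.parts_sum, h, Multiset.sum_zero])
  obtain ⟨i, hi⟩ := Multiset.exists_mem_of_ne_zero hne
  exact absurd ((hμ i hi).2.trans (Nat.Partition.le_of_mem_parts hi)) (not_le.2 hnk)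

theorem regCount_succ_of_dvd {d k : ℕ} (n : ℕ) (hk : d ∣ k) :
    regCount d (k + 1) n = regCount d k n :=
  Fintype.card_congr <| Equiv.subtypeEquivRight fun _ => forall₂_congr fun i _ =>
    and_congr_right fun hi =>
      ⟨Nat.le_of_succ_le, fun h => lt_of_le_of_ne h (by rintro rfl; exact hi hk)⟩

theorem regCount_eq_add {d k n : ℕ} (hk : ¬ d ∣ k) (hkn : k ≤ n) :
    regCount d k n = regCount d (k + 1) n + regCount d k (n - k) := by
  have hk1 : 1 ≤ k := Nat.pos_of_ne_zero (by rintro rfl; exact hk (dvd_zero d))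
  let Q (k : ℕ) {m : ℕ} (μ : m.Partition) : Prop := ∀ i ∈ μ.parts, ¬ d ∣ i ∧ k ≤ i
  have with_k :
      {x : {μ : n.Partition // Q k μ} // k ∈ x.1.parts} ≃ {ν : (n - k).Partition // Q k ν} :=
    (Equiv.subtypeSubtypeEquivSubtypeInter _ _).trans <|
      (Equiv.subtypeEquivRight fun _ => and_comm).trans <|
        (Equiv.subtypeSubtypeEquivSubtypeInter (k ∈ ·.parts) (Q k)).symm.trans <|
          (Nat.Partition.partitionWithPartEquiv hk1 hkn).subtypeEquiv fun x => by
            simp only [Q, Nat.Partition.partitionWithPartEquiv_apply_parts]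
            conv_lhs => rw [← Multiset.cons_erase x.2]
            rw [Multiset.forall_mem_cons]
            exact and_iff_right ⟨hk, le_rfl⟩
  have without_k :
      {x : {μ : n.Partition // Q k μ} // k ∉ x.1.parts} ≃ {μ : n.Partition // Q (k + 1) μ} :=
    (Equiv.subtypeSubtypeEquivSubtypeInter (Q k) (k ∉ ·.parts)).trans <|
      Equiv.subtypeEquivRight fun _ =>
        ⟨fun ⟨h, hk⟩ i hi => ⟨(h i hi).1, lt_of_le_of_ne (h i hi).2 (by rintro rfl; exact hk hi)⟩,
          fun h => ⟨fun i hi => ⟨(h i hi).1, Nat.le_of_succ_le (h i hi).2⟩,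
            fun hk => (h k hk).2.not_gt (Nat.lt_succ_self k)⟩⟩
  rw [regCount, ← Fintype.card_congr (Equiv.sumCompl fun x : {μ : n.Partition // Q k μ} =>
    k ∈ x.1.parts), Fintype.card_sum, Fintype.card_congr with_k, Fintype.card_congr without_k,
    add_comm]
  rfl

theorem regCount_eq (d k n : ℕ) : regCount d k n =
    if n = 0 then 1 else if n < k then 0
    else if d ∣ k then regCount d (k + 1) n else regCount d (k + 1) n + regCount d k (n - k) := by
  split_ifs with h0 hlt hdvd
  · subst h0
    exact regCount_zero_right d k
  · exact regCount_eq_zero_of_lt h0 hlt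
  · exact (regCount_succ_of_dvd n hdvd).symm
  · exact regCount_eq_add hdvd (not_lt.1 hlt)

/-- Row `k` lists `regCount d k n` for `n ≤ N`; it is obtained from row `k + 1` by summing over
the multiplicity `j` of the part `k`. -/
def regCountRow (d N k : ℕ) (next : List ℕ) : List ℕ :=
  if d ∣ k then next
  else (List.range (N + 1)).map fun n =>
    ((List.range (n / k + 1)).map fun j => next.getD (n - j * k) 0).sum

def regCountRows (d N : ℕ) : List (List ℕ) :=
  (List.range (N + 1)).foldr (fun k rows => regCountRow d N k (rows.headD []) :: rows)
    [1 :: List.replicate N 0]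

def regCountTab (k n : ℕ) : ℕ := ((regCountRows 6 34).getD k []).getD n 0

theorem regCountTab_eq : ∀ n < 35, ∀ k < 36, regCountTab k n =
    if n = 0 then 1 else if n < k then 0
    else if 6 ∣ k then regCountTab (k + 1) n
    else regCountTab (k + 1) n + regCountTab k (n - k) := by
  decide +kernel

theorem regCount_six_eq_regCountTab {n k : ℕ} (hn : n ≤ 34) (hk : k ≤ 35) :
    regCount 6 k n = regCountTab k n := by
  induction n using Nat.strong_induction_on generalizing k with
  | _ n ihn =>
  refine Nat.decreasingInduction (motive := fun k _ => regCount 6 k n = regCountTab k n)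
    (fun k hk ihk => ?_) ?_ hk
  · rw [regCount_eq, regCountTab_eq n (by omega) k (by omega)]
    split_ifs with h0 hlt hdvd
    · rfl
    · rfl
    · exact ihk
    · rw [ihk, ihn (n - k) (by omega) (by omega) (by omega)]
  · rw [regCount_eq, regCountTab_eq n (by omega) 35 (by omega)]
    split_ifs <;> first | rfl | omega

def maxp6 : ℕ → ℕ
  | 0 => 1
  | 1 => 1
  | 2 => 2
  | 3 => 3
  | 4 => 5
  | 5 => 7
  | n + 6 => 5 * maxp6 (n + 2)

theorem maxp6_add_four {n : ℕ} (hn : 2 ≤ n) : maxp6 (n + 4) = 5 * maxp6 n := by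
  obtain ⟨m, rfl⟩ := Nat.exists_eq_add_of_le' hn
  rfl

theorem maxp6_eq_five_mul {n : ℕ} (hn : 6 ≤ n) : maxp6 n = 5 * maxp6 (n - 4) := by
  rw [← maxp6_add_four (by omega), Nat.sub_add_cancel (by omega)]

theorem maxp6_add_mul_four {a : ℕ} (q : ℕ) (ha : 2 ≤ a) :
    maxp6 (a + 4 * q) = maxp6 a * 5 ^ q := by
  induction q with
  | zero => simp
  | succ q ih =>
    rw [show a + 4 * (q + 1) = a + 4 * q + 4 by ring, maxp6_add_four (by omega), ih]
    ring

theorem maxp6_mul_le_maxp6_add (a b : ℕ) : maxp6 a * maxp6 b ≤ maxp6 (a + b) := by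
  induction a using Nat.strong_induction_on generalizing b with
  | _ a iha =>
  by_cases ha : 6 ≤ a
  · rw [maxp6_eq_five_mul ha, maxp6_eq_five_mul (by omega : 6 ≤ a + b), mul_assoc,
      show a + b - 4 = a - 4 + b by omega]
    exact Nat.mul_le_mul_left 5 (iha (a - 4) (by omega) b)
  induction b using Nat.strong_induction_on with
  | _ b ihb =>
  by_cases hb : 6 ≤ b
  · rw [maxp6_eq_five_mul hb, maxp6_eq_five_mul (by omega : 6 ≤ a + b), mul_left_comm,
      show a + b - 4 = a + (b - 4) by omega]
    exact Nat.mul_le_mul_left 5 (ihb (b - 4) (by omega))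
  · interval_cases a <;> interval_cases b <;> decide

theorem prod_map_maxp6_le (s : Multiset ℕ) : (s.map maxp6).prod ≤ maxp6 s.sum := by
  induction s using Multiset.induction_on with
  | empty => simp [maxp6]
  | cons a s ih =>
    rw [Multiset.map_cons, Multiset.prod_cons, Multiset.sum_cons]
    exact (Nat.mul_le_mul_left _ ih).trans (maxp6_mul_le_maxp6_add a s.sum)

theorem regCountTab_one_le_maxp6 : ∀ n < 35, regCountTab 1 n ≤ maxp6 n := by decide +kernel

theorem regCountTab_one_eq_maxp6 : ∀ n < 6, regCountTab 1 n = maxp6 n := by decide +kernel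

theorem pk_six_eq_maxp6 {n : ℕ} (hn : n < 6) : pk 6 n = maxp6 n := by
  rw [pk_eq_regCount_one, regCount_six_eq_regCountTab (by omega) (by norm_num)]
  exact regCountTab_one_eq_maxp6 n hn

theorem List.eq_of_getD_zero_eq {l₁ l₂ : List ℕ} (h₁ : 0 ∉ l₁) (h₂ : 0 ∉ l₂)
    (h : ∀ i, l₁.getD i 0 = l₂.getD i 0) : l₁ = l₂ := by
  have key : ∀ {l l' : List ℕ}, 0 ∉ l → (∀ i, l.getD i 0 = l'.getD i 0) →
      ∀ (i x : ℕ), l[i]? = some x → l'[i]? = some x := by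
    intro l l' hl h i x hx
    have hx0 : x ≠ 0 := by rintro rfl; exact hl (List.mem_of_getElem? hx)
    have hi := h i
    rw [List.getD_eq_getElem?_getD, List.getD_eq_getElem?_getD, hx] at hi
    cases h' : l'[i]? <;> simp_all
  exact List.ext_getElem? fun i =>
    Option.ext fun x => ⟨key h₁ h i x, key h₂ (fun i => (h i).symm) i x⟩

theorem List.succ_mul_getD_le_sum {l : List ℕ} (hl : l.Pairwise (· ≥ ·)) (i : ℕ) :
    (i + 1) * l.getD i 0 ≤ l.sum := by
  induction l generalizing i with
  | nil => simp
  | cons a t ih =>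
    rw [List.pairwise_cons] at hl
    cases i with
    | zero => simp
    | succ j =>
      have hle : t.getD j 0 ≤ a := by
        rw [List.getD_eq_getElem?_getD]
        cases h : t[j]? with
        | none => simp
        | some x => exact hl.1 x (List.mem_of_getElem? h)
      rw [List.getD_cons_succ, List.sum_cons]
      nlinarith [ih hl.2 j]

theorem card_partition_parts_ge_le (k n : ℕ) (hk : 0 < k) :
    Fintype.card {μ : n.Partition // ∀ i ∈ μ.parts, k ≤ i} ≤
      ∏ i ∈ range (n / k), (n / (i + 1) + 1) := by
  let parts (μ : {μ : n.Partition // ∀ i ∈ μ.parts, k ≤ i}) : List ℕ :=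
    μ.1.parts.sort (· ≥ ·)
  have sum_parts μ : (parts μ).sum = n := by
    rw [← Multiset.sum_coe, Multiset.sort_eq, μ.1.parts_sum]
  have length_parts μ : (parts μ).length ≤ n / k := by
    have := Multiset.card_nsmul_le_sum μ.2
    rw [μ.1.parts_sum, smul_eq_mul] at this
    rwa [Multiset.length_sort, Nat.le_div_iff_mul_le hk]
  have zero_notMem μ : 0 ∉ parts μ := fun h =>
    (μ.1.parts_pos (Multiset.mem_sort _ |>.1 h)).ne rfl
  let f (μ) (i : Fin (n / k)) : Fin (n / (i + 1) + 1) :=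
    ⟨(parts μ).getD i 0, Nat.lt_succ_of_le <| (Nat.le_div_iff_mul_le (Nat.succ_pos _)).2 <| by
      rw [mul_comm]
      exact (List.succ_mul_getD_le_sum (Multiset.pairwise_sort _ _) _).trans (sum_parts μ).le⟩
  have hf : Function.Injective f := by
    intro μ ν h
    have hget i : (parts μ).getD i 0 = (parts ν).getD i 0 := by
      by_cases hi : i < n / k
      · exact congrArg Fin.val (congrFun h ⟨i, hi⟩)
      · rw [List.getD_eq_default _ _ ((length_parts μ).trans (by omega)),
          List.getD_eq_default _ _ ((length_parts ν).trans (by omega))]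
    have hsort := List.eq_of_getD_zero_eq (zero_notMem μ) (zero_notMem ν) hget
    refine Subtype.ext <| Nat.Partition.ext ?_
    rw [← Multiset.sort_eq μ.1.parts (· ≥ ·), ← Multiset.sort_eq ν.1.parts (· ≥ ·)]
    exact congrArg _ hsort
  calc _ ≤ Fintype.card ((i : Fin (n / k)) → Fin (n / (i + 1) + 1)) :=
        Fintype.card_le_of_injective f hf
    _ = _ := by
      rw [Fintype.card_pi]
      simp [Fin.prod_univ_eq_prod_range (fun i => n / (i + 1) + 1)]

theorem pow_self_le_four_pow_mul_factorial (m : ℕ) : m ^ m ≤ 4 ^ m * m ! :=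
  calc m ^ m ≤ (2 * m + 1 - m) ^ m := Nat.pow_le_pow_left (by omega) m
    _ ≤ (2 * m).descFactorial m := Nat.pow_sub_le_descFactorial _ _
    _ = m ! * m.centralBinom := by rw [Nat.descFactorial_eq_factorial_mul_choose, Nat.centralBinom]
    _ ≤ m ! * 4 ^ m := Nat.mul_le_mul_left _ (Nat.centralBinom_le_four_pow m)
    _ = 4 ^ m * m ! := mul_comm _ _

theorem prod_div_succ_add_one_le {k n : ℕ} (hk : 0 < k) (hkn : k ≤ n) :
    ∏ i ∈ range (n / k), (n / (i + 1) + 1) ≤ (8 * k) ^ (n / k) := by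
  set m := n / k with hm_def
  set P := ∏ i ∈ range m, (n / (i + 1) + 1)
  have hm : 0 < m := Nat.div_pos hkn hk
  have hfac : m ! * P ≤ (n + m) ^ m :=
    calc m ! * P = ∏ i ∈ range m, (i + 1) * (n / (i + 1) + 1) := by
          rw [prod_mul_distrib, prod_range_add_one_eq_factorial]
      _ ≤ (n + m) ^ #(range m) := prod_le_pow_card _ _ _ fun i hi => by
          have := Nat.div_mul_le_self n (i + 1)
          have := mem_range.1 hi
          nlinarith
      _ = (n + m) ^ m := by rw [card_range]
  have hnm : 4 * (n + m) ≤ 8 * k * m := by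
    have := Nat.lt_mul_div_succ n hk
    rw [← hm_def] at this
    nlinarith
  have : m ^ m * P ≤ m ^ m * (8 * k) ^ m :=
    calc m ^ m * P ≤ 4 ^ m * m ! * P :=
          Nat.mul_le_mul_right _ (pow_self_le_four_pow_mul_factorial m)
      _ = 4 ^ m * (m ! * P) := mul_assoc _ _ _
      _ ≤ 4 ^ m * (n + m) ^ m := Nat.mul_le_mul_left _ hfac
      _ = (4 * (n + m)) ^ m := (mul_pow _ _ _).symm
      _ ≤ (8 * k * m) ^ m := Nat.pow_le_pow_left hnm m
      _ = m ^ m * (8 * k) ^ m := by ring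
  exact Nat.le_of_mul_le_mul_left this (by positivity)

/-- Row `1` is `5 ^ 8 * (1, 7/5, 2, 3)`, matching `maxp6`; the other rows were found numerically so
that the bound of `scaled_regCount_six_le` propagates through the recurrence `regCount_eq_add`. -/
def layerBound (k r : ℕ) : ℕ :=
  (([[], [390625, 546875, 781250, 1171875], [156250, 156250, 234375, 390625],
    [109375, 78125, 78125, 234375], [93750, 62500, 31250, 125000],
    [75000, 50000, 25000, 100000], [71000, 35000, 15000, 95000],
    [71000, 35000, 15000, 95000], [69600, 34400, 11200, 80800],
    [66816, 33024, 10752, 77568], [66195, 30351, 9431, 77137],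
    [66119, 29733, 6783, 75922], [65881, 29678, 6175, 73277],
    [65881, 29678, 6175, 73277], [65763, 29150, 5937, 73227]] : List (List ℕ)).getD k []).getD r 0

theorem layerBound_one_mul_of_lt : ∀ n < 6, 2 ≤ n →
    layerBound 1 (n % 4) * 5 ^ (n / 4) = 5 ^ 8 * maxp6 n := by
  decide

theorem layerBound_one_mul {n : ℕ} (hn : 2 ≤ n) :
    layerBound 1 (n % 4) * 5 ^ (n / 4) = 5 ^ 8 * maxp6 n := by
  refine le_induction_by_period (p := 4) (by norm_num)
    (fun n h2 h6 => layerBound_one_mul_of_lt n h6 h2)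
    (fun n h2 ih => ?_) n hn
  rw [Nat.add_mod_right, Nat.add_div_right _ (by norm_num), pow_succ, maxp6_add_four h2,
    ← mul_assoc, ih]
  ring

theorem layerBound_succ_le_of_dvd : ∀ k < 14, 1 ≤ k → 6 ∣ k → ∀ r < 4,
    layerBound (k + 1) r ≤ layerBound k r := by
  decide

theorem layerBound_step_of_lt : ∀ k < 14, ∀ n < k + 4, ¬ 6 ∣ k → k ≤ n →
    layerBound (k + 1) (n % 4) * 5 ^ (n / 4) + layerBound k ((n - k) % 4) * 5 ^ ((n - k) / 4) ≤
      layerBound k (n % 4) * 5 ^ (n / 4) := by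
  decide

theorem layerBound_step {k n : ℕ} (hk : k < 14) (hdvd : ¬ 6 ∣ k) (hkn : k ≤ n) :
    layerBound (k + 1) (n % 4) * 5 ^ (n / 4) + layerBound k ((n - k) % 4) * 5 ^ ((n - k) / 4) ≤
      layerBound k (n % 4) * 5 ^ (n / 4) := by
  refine le_induction_by_period (by norm_num)
    (fun n hkn hn => layerBound_step_of_lt k hk n hn hdvd hkn) (fun n hkn ih => ?_) n hkn
  rw [show n + 4 - k = n - k + 4 by omega, Nat.add_mod_right, Nat.add_mod_right,
    Nat.add_div_right _ (by norm_num), Nat.add_div_right _ (by norm_num), pow_succ, pow_succ,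
    ← mul_assoc, ← mul_assoc, ← mul_assoc, ← add_mul]
  exact Nat.mul_le_mul_right 5 ih

theorem scaled_regCountTab_le : ∀ n < 35, 21 ≤ n → ∀ k ≤ 14, 1 ≤ k →
    5 ^ 8 * regCountTab k n ≤ layerBound k (n % 4) * 5 ^ (n / 4) := by
  decide +kernel

theorem scaled_prod_le_of_lt : ∀ n < 71, 35 ≤ n →
    5 ^ 8 * ∏ i ∈ range (n / 14), (n / (i + 1) + 1) ≤
      layerBound 14 (n % 4) * 5 ^ (n / 4) := by
  decide +kernel

theorem scaled_pow_le_of_lt : ∀ n < 99, 71 ≤ n →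
    5 ^ 8 * 112 ^ (n / 14) ≤ layerBound 14 (n % 4) * 5 ^ (n / 4) := by
  decide

theorem scaled_pow_le {n : ℕ} (hn : 71 ≤ n) :
    5 ^ 8 * 112 ^ (n / 14) ≤ layerBound 14 (n % 4) * 5 ^ (n / 4) := by
  refine le_induction_by_period (p := 28) (by norm_num)
    (fun n h71 h99 => scaled_pow_le_of_lt n h99 h71) (fun n h71 ih => ?_) n hn
  rw [show (n + 28) % 4 = n % 4 by omega, show (n + 28) / 14 = n / 14 + 2 by omega,
    show (n + 28) / 4 = n / 4 + 7 by omega, pow_add, pow_add]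
  calc 5 ^ 8 * (112 ^ (n / 14) * 112 ^ 2) = 5 ^ 8 * 112 ^ (n / 14) * 112 ^ 2 := by ring
    _ ≤ layerBound 14 (n % 4) * 5 ^ (n / 4) * 5 ^ 7 := Nat.mul_le_mul ih (by norm_num)
    _ = layerBound 14 (n % 4) * (5 ^ (n / 4) * 5 ^ 7) := by ring

theorem scaled_regCount_fourteen_le {n : ℕ} (hn : 35 ≤ n) :
    5 ^ 8 * regCount 6 14 n ≤ layerBound 14 (n % 4) * 5 ^ (n / 4) := by
  have hcount : regCount 6 14 n ≤ ∏ i ∈ range (n / 14), (n / (i + 1) + 1) :=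
    (Fintype.card_subtype_mono _ _ fun μ h i hi => (h i hi).2).trans
      (card_partition_parts_ge_le 14 n (by norm_num))
  refine (Nat.mul_le_mul_left _ hcount).trans ?_
  by_cases h : n < 71
  · exact scaled_prod_le_of_lt n h hn
  · exact (Nat.mul_le_mul_left _ (prod_div_succ_add_one_le (by norm_num) (by omega))).trans
      (scaled_pow_le (by omega))

theorem scaled_regCount_six_le {n k : ℕ} (hn : 21 ≤ n) (hk1 : 1 ≤ k) (hk : k ≤ 14) :
    5 ^ 8 * regCount 6 k n ≤ layerBound k (n % 4) * 5 ^ (n / 4) := by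
  induction n using Nat.strong_induction_on generalizing k with
  | _ n ihn =>
  by_cases hn35 : n < 35
  · rw [regCount_six_eq_regCountTab (by omega) (by omega)]
    exact scaled_regCountTab_le n hn35 hn k hk hk1
  refine Nat.decreasingInduction (motive := fun k _ => 1 ≤ k →
      5 ^ 8 * regCount 6 k n ≤ layerBound k (n % 4) * 5 ^ (n / 4))
    (fun k hk ih hk1 => ?_) (fun _ => scaled_regCount_fourteen_le (by omega)) hk hk1
  by_cases hdvd : 6 ∣ k
  · rw [← regCount_succ_of_dvd n hdvd]
    exact (ih (by omega)).trans (Nat.mul_le_mul_right _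
      (layerBound_succ_le_of_dvd k hk hk1 hdvd _ (Nat.mod_lt _ (by norm_num))))
  · rw [regCount_eq_add hdvd (by omega), mul_add]
    exact (Nat.add_le_add (ih (by omega)) (ihn (n - k) (by omega) (by omega) hk1 hk.le)).trans
      (layerBound_step hk hdvd (by omega))

theorem pk_six_le_maxp6 (n : ℕ) : pk 6 n ≤ maxp6 n := by
  rw [pk_eq_regCount_one]
  by_cases hn : n ≤ 34
  · rw [regCount_six_eq_regCountTab hn (by norm_num)]
    exact regCountTab_one_le_maxp6 n (by omega)
  · have h := scaled_regCount_six_le (n := n) (k := 1) (by omega) le_rfl (by norm_num)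
    rw [layerBound_one_mul (by omega)] at h
    exact Nat.le_of_mul_le_mul_left h (by positivity)

theorem pkext_six_le_maxp6 {n : ℕ} (μ : n.Partition) : pkext 6 μ ≤ maxp6 n :=
  calc pkext 6 μ ≤ (μ.parts.map maxp6).prod :=
        Multiset.prod_map_le_prod_map _ _ fun i _ => pk_six_le_maxp6 i
    _ ≤ maxp6 μ.parts.sum := prod_map_maxp6_le _
    _ = maxp6 n := by rw [μ.parts_sum]

theorem exists_regular_pkext_six_eq_maxp6 {n : ℕ} (hn : 2 ≤ n) :
    ∃ μ : n.Partition, (∀ i ∈ μ.parts, ¬ 6 ∣ i) ∧ pkext 6 μ = maxp6 n := by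
  refine le_induction_by_period
    (P := fun n => ∃ μ : n.Partition, (∀ i ∈ μ.parts, ¬ 6 ∣ i) ∧ pkext 6 μ = maxp6 n)
    (p := 4) (by norm_num) (fun n h2 h6 => ?_) (fun n h2 ⟨μ, hreg, hμ⟩ => ?_) n hn
  · refine ⟨Nat.Partition.indiscrete n, ?_, ?_⟩
    · rw [Nat.Partition.indiscrete_parts (by omega)]
      simp only [Multiset.mem_singleton, forall_eq]
      omega
    · rw [pkext, Nat.Partition.indiscrete_parts (by omega), Multiset.map_singleton,
        Multiset.prod_singleton, pk_six_eq_maxp6 (by omega)]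
  · refine ⟨⟨4 ::ₘ μ.parts, fun hi => ?_, by rw [Multiset.sum_cons, μ.parts_sum, add_comm]⟩,
      Multiset.forall_mem_cons.2 ⟨by norm_num, hreg⟩, ?_⟩
    · rcases Multiset.mem_cons.1 hi with rfl | hi
      · norm_num
      · exact μ.parts_pos hi
    · rw [pkext, Multiset.map_cons, Multiset.prod_cons, ← pkext, hμ,
        pk_six_eq_maxp6 (by norm_num), maxp6_add_four h2]
      rfl

theorem isGreatest_pkext_six {n : ℕ} (hn : 2 ≤ n) :
    IsGreatest {m : ℕ | ∃ μ : n.Partition, (∀ i ∈ μ.parts, ¬ 6 ∣ i) ∧ pkext 6 μ = m}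
      (maxp6 n) :=
  ⟨exists_regular_pkext_six_eq_maxp6 hn, by
    rintro _ ⟨μ, -, rfl⟩
    exact pkext_six_le_maxp6 μ⟩

theorem maxp6_formula (n : ℕ) (hn : 2 ≤ n) :
    (n % 4 = 0 →
      IsGreatest {m : ℕ | ∃ μ : n.Partition, (∀ i ∈ μ.parts, ¬ 6 ∣ i) ∧ pkext 6 μ = m}
        (5 ^ (n / 4))) ∧
    (n % 4 = 1 →
      IsGreatest {m : ℕ | ∃ μ : n.Partition, (∀ i ∈ μ.parts, ¬ 6 ∣ i) ∧ pkext 6 μ = m}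
        (7 * 5 ^ ((n - 5) / 4))) ∧
    (n % 4 = 2 →
      IsGreatest {m : ℕ | ∃ μ : n.Partition, (∀ i ∈ μ.parts, ¬ 6 ∣ i) ∧ pkext 6 μ = m}
        (2 * 5 ^ ((n - 2) / 4))) ∧
    (n % 4 = 3 →
      IsGreatest {m : ℕ | ∃ μ : n.Partition, (∀ i ∈ μ.parts, ¬ 6 ∣ i) ∧ pkext 6 μ = m}
        (3 * 5 ^ ((n - 3) / 4))) := by
  have key : ∀ a q, 2 ≤ a → n = a + 4 * q →
      IsGreatest {m : ℕ | ∃ μ : n.Partition, (∀ i ∈ μ.parts, ¬ 6 ∣ i) ∧ pkext 6 μ = m}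
        (maxp6 a * 5 ^ q) := by
    rintro a q ha rfl
    rw [← maxp6_add_mul_four q ha]
    exact isGreatest_pkext_six hn
  refine ⟨fun h => ?_, fun h => key 5 _ (by norm_num) (by omega),
    fun h => key 2 _ le_rfl (by omega), fun h => key 3 _ (by norm_num) (by omega)⟩
  rw [show n / 4 = (n - 4) / 4 + 1 by omega, pow_succ']
  exact key 4 _ (by norm_num) (by omega)
end

section
/- For n ≡ 0 (mod 4) with n ≥ 2, the maximum of p_6(μ) over 6-regular partitions μ of n is attained exactly at the partition consisting of n/4 parts equal to 4. -/
noncomputable def pAtLeast (k n : ℕ) : ℕ :=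
  Fintype.card {μ : n.Partition // ∀ i ∈ μ.parts, k ≤ i}

theorem pAtLeast_zero_right (k : ℕ) : pAtLeast k 0 = 1 := by
  simp [pAtLeast]

theorem pAtLeast_eq_zero_of_lt {k n : ℕ} (hn : n ≠ 0) (hnk : n < k) : pAtLeast k n = 0 := by
  rw [pAtLeast, Fintype.card_eq_zero_iff]
  refine ⟨fun ⟨μ, hμ⟩ => ?_⟩
  obtain ⟨i, hi⟩ : ∃ i, i ∈ μ.parts := Multiset.exists_mem_of_ne_zero fun h => hn <| by
    simpa [h] using μ.parts_sum.symm
  have := hμ i hi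
  have := Nat.Partition.le_of_mem_parts hi
  omega

theorem pAtLeast_succ_le (k n : ℕ) : pAtLeast (k + 1) n ≤ pAtLeast k n :=
  Fintype.card_subtype_mono _ _ fun _ h i hi => Nat.le_of_succ_le (h i hi)

theorem pAtLeast_eq_add {k n : ℕ} (hk : 1 ≤ k) (hkn : k ≤ n) :
    pAtLeast k n = pAtLeast (k + 1) n + pAtLeast k (n - k) := by
  classical
  set P : n.Partition → Prop := fun μ => ∀ i ∈ μ.parts, k ≤ i
  have without_k : {x : {μ // P μ} // k ∉ x.1.parts} ≃
      {μ : n.Partition // ∀ i ∈ μ.parts, k + 1 ≤ i} :=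
    (Equiv.subtypeSubtypeEquivSubtypeInter P (k ∉ ·.parts)).trans <|
      Equiv.subtypeEquivRight fun μ =>
        ⟨fun h i hi => lt_of_le_of_ne (h.1 i hi) fun e => h.2 (e ▸ hi),
         fun h => ⟨fun i hi => Nat.le_of_succ_le (h i hi), fun hk' => by
            have := h k hk'; omega⟩⟩
  have with_k : {x : {μ // P μ} // k ∈ x.1.parts} ≃
      {ν : (n - k).Partition // ∀ i ∈ ν.parts, k ≤ i} :=
    (Equiv.subtypeSubtypeEquivSubtypeInter P (k ∈ ·.parts)).trans <|
      (Equiv.subtypeEquivRight fun μ => and_comm).trans <|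
        (Equiv.subtypeSubtypeEquivSubtypeInter (k ∈ ·.parts) P).symm.trans <|
          Equiv.subtypeEquiv (Nat.Partition.partitionWithPartEquiv hk hkn) fun μ => by
            simp only [Nat.Partition.partitionWithPartEquiv_apply_parts, P]
            conv_lhs => rw [← Multiset.cons_erase μ.2]
            simp
  rw [pAtLeast, ← Fintype.card_congr (Equiv.sumCompl fun x : {μ // P μ} => k ∈ x.1.parts),
    Fintype.card_sum, Fintype.card_congr with_k, Fintype.card_congr without_k, add_comm]
  rfl

theorem pAtLeast_succ_succ_le {k : ℕ} (n : ℕ) (hk : 1 ≤ k) :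
    pAtLeast (k + 1) (n + 1) ≤ pAtLeast k n := by
  by_cases hnk : n < k
  · simp [pAtLeast_eq_zero_of_lt n.succ_ne_zero (by omega : n + 1 < k + 1)]
  calc pAtLeast (k + 1) (n + 1) = pAtLeast (k + 2) (n + 1) + pAtLeast (k + 1) (n - k) := by
        rw [pAtLeast_eq_add (by omega) (by omega)]; congr 2; omega
    _ ≤ pAtLeast (k + 1) n + pAtLeast k (n - k) :=
        add_le_add (pAtLeast_succ_succ_le n (by omega)) (pAtLeast_succ_le k _)
    _ = pAtLeast k n := (pAtLeast_eq_add hk (by omega)).symm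
termination_by n + 1 - k

-- A kernel-reducible version of `pAtLeast` (Mathlib's `Fintype` instance on partitions is not).
def pAtLeastFuel : ℕ → ℕ → ℕ → ℕ
  | _, _, 0 => 1
  | 0, _, _ + 1 => 0
  | fuel + 1, k, n + 1 =>
    if n + 1 < k then 0 else pAtLeastFuel fuel (k + 1) (n + 1) + pAtLeastFuel fuel k (n + 1 - k)

theorem pAtLeast_eq_pAtLeastFuel (fuel : ℕ) :
    ∀ {k n : ℕ}, 1 ≤ k → 2 * n + 2 ≤ fuel + k → pAtLeast k n = pAtLeastFuel fuel k n := by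
  induction fuel with
  | zero =>
    rintro k (_ | n) hk hfuel
    · simp [pAtLeast_zero_right, pAtLeastFuel]
    · rw [pAtLeastFuel]; exact pAtLeast_eq_zero_of_lt n.succ_ne_zero (by omega)
  | succ fuel ih =>
    rintro k (_ | n) hk hfuel
    · simp [pAtLeast_zero_right, pAtLeastFuel]
    rw [pAtLeastFuel]
    split_ifs with hnk
    · exact pAtLeast_eq_zero_of_lt n.succ_ne_zero hnk
    · rw [pAtLeast_eq_add hk (by omega), ih (by omega) (by omega), ih hk (by omega)]

/-- `growthConst k / 100` is the constant `c_k` of the bound `p(k, n) ≤ c_k (5/4)ⁿ`. The values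
satisfy `c_k (5ᵏ - 4ᵏ) ≥ c_{k+1} 5ᵏ` for `k < 9`, as the recursion `pAtLeast_eq_add` requires,
and `4 c₈ ≤ 5 c₉`, as the shift `pAtLeast_succ_succ_le` requires. -/
def growthConst : ℕ → ℕ
  | 1 => 15000
  | 2 => 3000
  | 3 => 1080
  | 4 => 527
  | 5 => 311
  | 6 => 209
  | 7 => 154
  | 8 => 121
  | _ => 100

theorem growthConst_succ_mul_add_le :
    ∀ k, 1 ≤ k → k < 9 →
      growthConst (k + 1) * 5 ^ k + growthConst k * 4 ^ k ≤ growthConst k * 5 ^ k := by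
  decide

theorem hundred_mul_four_pow_mul_pAtLeast_le {k : ℕ} (n : ℕ) (hk : 1 ≤ k) (hk9 : k ≤ 9) :
    100 * 4 ^ n * pAtLeast k n ≤ growthConst k * 5 ^ n := by
  rcases Nat.eq_zero_or_pos n with rfl | hn
  · rw [pAtLeast_zero_right]
    interval_cases k <;> simp [growthConst]
  by_cases hnk : n < k
  · simp [pAtLeast_eq_zero_of_lt hn.ne' hnk]
  rcases Nat.lt_or_ge k 9 with hk9' | hk9'
  · obtain ⟨m, rfl⟩ : ∃ m, n = k + m := ⟨n - k, by omega⟩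
    have ih_succ := hundred_mul_four_pow_mul_pAtLeast_le (k := k + 1) (k + m) (by omega) hk9'
    have ih_sub := hundred_mul_four_pow_mul_pAtLeast_le m hk hk9
    calc 100 * 4 ^ (k + m) * pAtLeast k (k + m)
        = 100 * 4 ^ (k + m) * pAtLeast (k + 1) (k + m) + 4 ^ k * (100 * 4 ^ m * pAtLeast k m) := by
          rw [pAtLeast_eq_add hk (by omega), Nat.add_sub_cancel_left]; ring
      _ ≤ growthConst (k + 1) * 5 ^ (k + m) + 4 ^ k * (growthConst k * 5 ^ m) := by gcongr
      _ = (growthConst (k + 1) * 5 ^ k + growthConst k * 4 ^ k) * 5 ^ m := by ring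
      _ ≤ growthConst k * 5 ^ k * 5 ^ m := by
          gcongr; exact growthConst_succ_mul_add_le k hk hk9'
      _ = growthConst k * 5 ^ (k + m) := by ring
  · obtain rfl : k = 9 := by omega
    obtain ⟨m, rfl⟩ : ∃ m, n = m + 1 := ⟨n - 1, by omega⟩
    have ih := hundred_mul_four_pow_mul_pAtLeast_le (k := 8) m (by norm_num) (by norm_num)
    calc 100 * 4 ^ (m + 1) * pAtLeast 9 (m + 1) = 4 * (100 * 4 ^ m * pAtLeast 9 (m + 1)) := by
          ring
      _ ≤ 4 * (100 * 4 ^ m * pAtLeast 8 m) := by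
          gcongr; exact pAtLeast_succ_succ_le m (by norm_num)
      _ ≤ 4 * (growthConst 8 * 5 ^ m) := by gcongr
      _ ≤ growthConst 9 * 5 ^ (m + 1) := by simp only [growthConst]; rw [pow_succ]; omega
termination_by 10 * n + 9 - k

theorem card_partition_eq_pAtLeast_one (n : ℕ) : Fintype.card n.Partition = pAtLeast 1 n :=
  (Fintype.card_congr (Equiv.subtypeUnivEquiv fun μ _ hi => μ.parts_pos hi)).symm

theorem four_pow_mul_card_partition_le (n : ℕ) :
    4 ^ n * Fintype.card n.Partition ≤ 150 * 5 ^ n := by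
  have h := hundred_mul_four_pow_mul_pAtLeast_le n le_rfl (by norm_num)
  rw [← card_partition_eq_pAtLeast_one] at h
  simp only [growthConst, mul_assoc] at h
  omega

theorem card_partition_eq_pAtLeastFuel (n : ℕ) :
    Fintype.card n.Partition = pAtLeastFuel (2 * n + 1) 1 n := by
  rw [card_partition_eq_pAtLeast_one, pAtLeast_eq_pAtLeastFuel (2 * n + 1) le_rfl (by omega)]

theorem card_partition_four : Fintype.card (Nat.Partition 4) = 5 := by
  rw [card_partition_eq_pAtLeastFuel]
  decide

theorem const_mul_pow_lt_pow {n : ℕ} (hn : 28 ≤ n) : 150 ^ 4 * 625 ^ n < 1280 ^ n := by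
  induction n, hn using Nat.le_induction with
  | base => norm_num
  | succ n _ ih => rw [pow_succ 625, pow_succ 1280]; omega

theorem card_partition_pow_four_lt_of_le {n : ℕ} (hn : 28 ≤ n) :
    Fintype.card n.Partition ^ 4 < 5 ^ n := by
  have hbound := Nat.pow_le_pow_left (four_pow_mul_card_partition_le n) 4
  have key : 256 ^ n * Fintype.card n.Partition ^ 4 < 256 ^ n * 5 ^ n :=
    calc 256 ^ n * Fintype.card n.Partition ^ 4 = (4 ^ n * Fintype.card n.Partition) ^ 4 := by
          rw [mul_pow, ← pow_mul, mul_comm n, pow_mul]; norm_num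
      _ ≤ (150 * 5 ^ n) ^ 4 := hbound
      _ = 150 ^ 4 * 625 ^ n := by rw [mul_pow, ← pow_mul, mul_comm n, pow_mul]; norm_num
      _ < 1280 ^ n := const_mul_pow_lt_pow hn
      _ = 256 ^ n * 5 ^ n := by rw [← mul_pow]; norm_num
  exact Nat.lt_of_mul_lt_mul_left key

theorem card_partition_pow_four_lt {n : ℕ} (h0 : n ≠ 0) (h4 : n ≠ 4) :
    Fintype.card n.Partition ^ 4 < 5 ^ n := by
  rcases Nat.lt_or_ge n 28 with hsmall | hlarge
  · have table : ∀ m < 28, m ≠ 0 → m ≠ 4 → pAtLeastFuel (2 * m + 1) 1 m ^ 4 < 5 ^ m := by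
      decide
    rw [card_partition_eq_pAtLeastFuel]
    exact table n hsmall h0 h4
  · exact card_partition_pow_four_lt_of_le hlarge

theorem card_partition_pow_four_le (n : ℕ) : Fintype.card n.Partition ^ 4 ≤ 5 ^ n := by
  obtain rfl | h0 := eq_or_ne n 0
  · simp
  obtain rfl | h4 := eq_or_ne n 4
  · rw [card_partition_four]
  exact (card_partition_pow_four_lt h0 h4).le

theorem pk_le_card_partition (k n : ℕ) : pk k n ≤ Fintype.card n.Partition :=
  Fintype.card_subtype_le _

theorem pk_eq_card_partition_of_lt {k n : ℕ} (h : n < k) : pk k n = Fintype.card n.Partition :=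
  Fintype.card_congr <| Equiv.subtypeUnivEquiv fun μ _ hi =>
    Nat.not_dvd_of_pos_of_lt (μ.parts_pos hi) ((Nat.Partition.le_of_mem_parts hi).trans_lt h)

theorem pk_six_four : pk 6 4 = 5 := by
  rw [pk_eq_card_partition_of_lt (by norm_num), card_partition_four]

theorem pk_six_pow_four_le (m : ℕ) : pk 6 m ^ 4 ≤ 5 ^ m :=
  (Nat.pow_le_pow_left (pk_le_card_partition 6 m) 4).trans (card_partition_pow_four_le m)

theorem pk_six_pow_four_lt {m : ℕ} (h0 : m ≠ 0) (h4 : m ≠ 4) : pk 6 m ^ 4 < 5 ^ m :=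
  (Nat.pow_le_pow_left (pk_le_card_partition 6 m) 4).trans_lt (card_partition_pow_four_lt h0 h4)

theorem Multiset.prod_map_pow_le_pow_sum {f : ℕ → ℕ} {r c : ℕ} {s : Multiset ℕ}
    (h : ∀ m ∈ s, f m ^ r ≤ c ^ m) : (s.map f).prod ^ r ≤ c ^ s.sum := by
  induction s using Multiset.induction_on with
  | empty => simp
  | cons a s ih =>
    simp only [Multiset.map_cons, Multiset.prod_cons, Multiset.sum_cons, mul_pow, pow_add]
    exact Nat.mul_le_mul (h a (s.mem_cons_self a))
      (ih fun m hm => h m (Multiset.mem_cons_of_mem hm))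

theorem Multiset.prod_map_pow_lt_pow_sum {f : ℕ → ℕ} {r c : ℕ} {s : Multiset ℕ} (hc : c ≠ 0)
    (h : ∀ m ∈ s, f m ^ r ≤ c ^ m) (hlt : ∃ m ∈ s, f m ^ r < c ^ m) :
    (s.map f).prod ^ r < c ^ s.sum := by
  obtain ⟨m, hm, hlt⟩ := hlt
  obtain ⟨t, rfl⟩ := Multiset.exists_cons_of_mem hm
  simp only [Multiset.map_cons, Multiset.prod_cons, Multiset.sum_cons, mul_pow, pow_add]
  exact Nat.mul_lt_mul_of_lt_of_le hlt
    (prod_map_pow_le_pow_sum fun m hm => h m (Multiset.mem_cons_of_mem hm)) (by positivity)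

theorem pkext_six_pow_four_le {n : ℕ} (μ : n.Partition) : pkext 6 μ ^ 4 ≤ 5 ^ n := by
  have h := Multiset.prod_map_pow_le_pow_sum (f := pk 6) (r := 4) (c := 5)
    fun m (_ : m ∈ μ.parts) => pk_six_pow_four_le m
  rwa [μ.parts_sum] at h

theorem pkext_six_pow_four_lt {n : ℕ} (μ : n.Partition) (h : ∃ m ∈ μ.parts, m ≠ 4) :
    pkext 6 μ ^ 4 < 5 ^ n := by
  obtain ⟨m, hm, h4⟩ := h
  have h := Multiset.prod_map_pow_lt_pow_sum (f := pk 6) (r := 4) (s := μ.parts) (by norm_num)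
    (fun m _ => pk_six_pow_four_le m) ⟨m, hm, pk_six_pow_four_lt (μ.parts_pos hm).ne' h4⟩
  rwa [μ.parts_sum] at h

def Nat.Partition.replicate {n d : ℕ} (hd : 0 < d) (h : d ∣ n) : n.Partition where
  parts := Multiset.replicate (n / d) d
  parts_pos hi := (Multiset.eq_of_mem_replicate hi).symm ▸ hd
  parts_sum := by rw [Multiset.sum_replicate, smul_eq_mul, Nat.div_mul_cancel h]

theorem Nat.Partition.parts_eq_replicate_of_forall_eq {n d : ℕ} {μ : n.Partition} (hd : 0 < d)
    (h : ∀ m ∈ μ.parts, m = d) : μ.parts = Multiset.replicate (n / d) d := by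
  have hμ := Multiset.eq_replicate_card.2 h
  have hsum := μ.parts_sum
  rw [hμ, Multiset.sum_replicate, smul_eq_mul] at hsum
  rw [hμ, Nat.div_eq_of_eq_mul_left hd hsum.symm]

theorem pkext_replicate (k : ℕ) {n d : ℕ} (hd : 0 < d) (h : d ∣ n) :
    pkext k (Nat.Partition.replicate hd h) = pk k d ^ (n / d) := by
  simp [pkext, Nat.Partition.replicate]

theorem maxp6_unique_maximizer_general (n : ℕ) (h4 : n % 4 = 0) :
    ∀ μ : n.Partition, (∀ i ∈ μ.parts, ¬ 6 ∣ i) →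
      ((∀ ν : n.Partition, (∀ i ∈ ν.parts, ¬ 6 ∣ i) → pkext 6 ν ≤ pkext 6 μ) ↔
        μ.parts = Multiset.replicate (n / 4) 4) := by
  intro μ _
  have hdvd : 4 ∣ n := Nat.dvd_of_mod_eq_zero h4
  set fours := Nat.Partition.replicate (by norm_num) hdvd
  have hfours : pkext 6 fours ^ 4 = 5 ^ n := by
    rw [pkext_replicate, pk_six_four, ← pow_mul, Nat.div_mul_cancel hdvd]
  constructor
  · intro hmax
    by_contra hne
    have hlt := pkext_six_pow_four_lt μ <| by
      contrapose! hne
      exact Nat.Partition.parts_eq_replicate_of_forall_eq (by norm_num) hne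
    have hge := Nat.pow_le_pow_left (hmax fours fun i hi => by
      rw [Multiset.eq_of_mem_replicate hi]; norm_num) 4
    omega
  · intro hμ ν _
    have : pkext 6 μ = pkext 6 fours := by simp only [pkext, hμ]; rfl
    rw [this]
    exact le_of_pow_le_pow_left₀ (by norm_num) (by positivity) (hfours ▸ pkext_six_pow_four_le ν)

theorem maxp6_unique_maximizer (n : ℕ) (hn : 2 ≤ n) (h4 : n % 4 = 0) :
    ∀ μ : n.Partition, (∀ i ∈ μ.parts, ¬ 6 ∣ i) →
      ((∀ ν : n.Partition, (∀ i ∈ ν.parts, ¬ 6 ∣ i) → pkext 6 ν ≤ pkext 6 μ) ↔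
        μ.parts = Multiset.replicate (n / 4) 4) :=
  maxp6_unique_maximizer_general n h4
end
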